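/- arXiv:2403.19824 — 9 statements merged into one kernel-verified Lean document; each statement's English description precedes it below -/
import Mathlib

section
/- Let n ≥ 2 and q be a prime power. Let Q ∈ F_q[x_1,…,x_n] be a polynomial of degree d, and suppose there are ℓ, m ∈ Z_{≥0} with ℓ ≥ 2 such that every exponent α ∈ Z_{≥0}^n of a monomial appearing in Q satisfies α_1 + ⋯ + α_{n-1} + ℓα_n = m. Let f ∈ F_q[s_1,…,s_{n-1}] be a homogeneous polynomial of degree ℓ. Let k ∈ N be such that d < k(q-1), and suppose that for every nonzero ρ ∈ F_q and every β ∈ Z_{≥0}^n with β_1 + ⋯ + β_n < k, the polynomial Q_{β,ρ}(s) := Q^{(β)}(ρ·(s, f(s))) ∈ F_q[s_1,…,s_{n-1}] is the zero polynomial. Then Q is the zero polynomial. -/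
open MvPolynomial

/-- The β-th Hasse derivative of a multivariate polynomial `P`: the coefficient of `y^β`
in `P(x + y)`, where the outer variables are `y` and the coefficients are polynomials in `x`. -/
noncomputable def hasseDeriv {F : Type*} [CommRing F] {n : ℕ}
    (β : Fin n →₀ ℕ) (P : MvPolynomial (Fin n) F) : MvPolynomial (Fin n) F :=
  MvPolynomial.coeff β
    (MvPolynomial.eval₂ ((MvPolynomial.C).comp (MvPolynomial.C))
      (fun i => MvPolynomial.C (MvPolynomial.X i) + MvPolynomial.X i) P)

/-- The substitution tuple `(s₁, …, s_n, f)`. -/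
noncomputable def wsub {F : Type*} [CommRing F] {n : ℕ} (f : MvPolynomial (Fin n) F) :
    Fin (n + 1) → MvPolynomial (Fin n) F :=
  fun i => if hi : (i : ℕ) < n then MvPolynomial.X ⟨i, hi⟩ else f

lemma wsub_castSucc {F : Type*} [CommRing F] {n : ℕ} (f : MvPolynomial (Fin n) F) (i : Fin n) :
    wsub f i.castSucc = MvPolynomial.X i := by
  simp [wsub, i.isLt]

lemma wsub_last {F : Type*} [CommRing F] {n : ℕ} (f : MvPolynomial (Fin n) F) :
    wsub f (Fin.last n) = f := by
  simp [wsub]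

/-- Auxiliary: product of `(X * C (w i)) ^ α i`. -/
lemma prod_XC_pow {S : Type*} [CommRing S] {σ : Type*} [Fintype σ] (w : σ → S) (α : σ →₀ ℕ) :
    ∏ i, (Polynomial.X * Polynomial.C (w i)) ^ α i =
      Polynomial.C (∏ i, w i ^ α i) * Polynomial.X ^ (∑ i, α i) := by
  calc ∏ i, (Polynomial.X * Polynomial.C (w i)) ^ α i
      = ∏ i, (Polynomial.X ^ α i * Polynomial.C (w i) ^ α i) :=
        Finset.prod_congr rfl fun i _ => mul_pow _ _ _
    _ = (∏ i, Polynomial.X ^ α i) * ∏ i, Polynomial.C (w i) ^ α i := Finset.prod_mul_distrib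
    _ = Polynomial.X ^ (∑ i, α i) * ∏ i, Polynomial.C (w i) ^ α i := by
        rw [Finset.prod_pow_eq_pow_sum]
    _ = (∏ i, Polynomial.C (w i) ^ α i) * Polynomial.X ^ (∑ i, α i) := mul_comm _ _
    _ = Polynomial.C (∏ i, w i ^ α i) * Polynomial.X ^ (∑ i, α i) := by
        congr 1
        rw [map_prod]
        exact Finset.prod_congr rfl fun i _ => (map_pow _ _ _).symm

/-- If all Hasse derivatives of order `< k` vanish after the substitution
`x ↦ ρ · (s, f(s))`, then `(X - ρ)^k` divides `Q(X·s, X·f(s))`. -/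
lemma hasse_dvd {F : Type*} [CommRing F] {n : ℕ} (f : MvPolynomial (Fin n) F)
    (Q : MvPolynomial (Fin (n + 1)) F) (k : ℕ) (ρ : F)
    (h : ∀ β : Fin (n + 1) →₀ ℕ, (∑ i, β i) < k →
      MvPolynomial.aeval (fun i => MvPolynomial.C ρ * wsub f i) (hasseDeriv β Q) = 0) :
    (Polynomial.X - Polynomial.C (MvPolynomial.C ρ)) ^ k ∣
      MvPolynomial.aeval (fun i => Polynomial.X * Polynomial.C (wsub f i)) Q := by
  classical
  let c₀ : MvPolynomial (Fin (n + 1)) F →+* Polynomial (MvPolynomial (Fin n) F) :=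
    (Polynomial.C : MvPolynomial (Fin n) F →+* Polynomial (MvPolynomial (Fin n) F)).comp
      (MvPolynomial.aeval (fun i => MvPolynomial.C ρ * wsub f i) :
        MvPolynomial (Fin (n + 1)) F →ₐ[F] MvPolynomial (Fin n) F).toRingHom
  let v : Fin (n + 1) → Polynomial (MvPolynomial (Fin n) F) :=
    fun i => Polynomial.X * Polynomial.C (wsub f i)
  let P' : MvPolynomial (Fin (n + 1)) (MvPolynomial (Fin (n + 1)) F) :=
    MvPolynomial.eval₂ ((MvPolynomial.C).comp (MvPolynomial.C))
      (fun i => MvPolynomial.C (MvPolynomial.X i) + MvPolynomial.X i) Q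
  have hstep1 : Polynomial.X ^ k ∣ MvPolynomial.eval₂ c₀ v P' := by
    rw [MvPolynomial.eval₂_eq' c₀ v P']
    apply Finset.dvd_sum
    intro β hβ
    by_cases hlt : (∑ i, β i) < k
    · have h0 : c₀ (MvPolynomial.coeff β P') = 0 := by
        have hcoeff : MvPolynomial.coeff β P' = hasseDeriv β Q := rfl
        show Polynomial.C
          (MvPolynomial.aeval (fun i => MvPolynomial.C ρ * wsub f i)
            (MvPolynomial.coeff β P')) = 0
        rw [hcoeff, h β hlt, map_zero]
      rw [h0, zero_mul]
      exact dvd_zero _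
    · have hprod : ∏ i, v i ^ β i =
          Polynomial.C (∏ i, wsub f i ^ β i) * Polynomial.X ^ (∑ i, β i) :=
        prod_XC_pow (wsub f) β
      rw [hprod]
      exact Dvd.dvd.mul_left (Dvd.dvd.mul_left (pow_dvd_pow _ (le_of_not_gt hlt)) _) _
  have hH : MvPolynomial.eval₂ c₀ v P' =
      MvPolynomial.aeval
        (fun i => (Polynomial.X + Polynomial.C (MvPolynomial.C ρ)) * Polynomial.C (wsub f i))
        Q := by
    rw [show MvPolynomial.eval₂ c₀ v P' = MvPolynomial.eval₂Hom c₀ v P' from rfl]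
    rw [MvPolynomial.eval₂_comp_left (MvPolynomial.eval₂Hom c₀ v)
      ((MvPolynomial.C).comp (MvPolynomial.C))
      (fun i => MvPolynomial.C (MvPolynomial.X i) + MvPolynomial.X i) Q]
    rw [MvPolynomial.aeval_def]
    congr 1
    · ext a
      simp [c₀, Polynomial.algebraMap_apply, MvPolynomial.algebraMap_eq]
    · funext i
      simp only [Function.comp_apply, map_add, MvPolynomial.eval₂Hom_C,
        MvPolynomial.eval₂Hom_X', RingHom.coe_comp, MvPolynomial.aeval_X, AlgHom.toRingHom_eq_coe,
        RingHom.coe_coe, c₀, v]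
      rw [Polynomial.C_mul]
      ring
  rw [hH] at hstep1
  have hmap := map_dvd
    (Polynomial.eval₂RingHom
      (Polynomial.C : MvPolynomial (Fin n) F →+* Polynomial (MvPolynomial (Fin n) F))
      (Polynomial.X - Polynomial.C (MvPolynomial.C ρ))) hstep1
  have e1 : (Polynomial.eval₂RingHom
      (Polynomial.C : MvPolynomial (Fin n) F →+* Polynomial (MvPolynomial (Fin n) F))
      (Polynomial.X - Polynomial.C (MvPolynomial.C ρ))) (Polynomial.X ^ k) =
      (Polynomial.X - Polynomial.C (MvPolynomial.C ρ)) ^ k := by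
    rw [map_pow]
    norm_num
  have e2 : (Polynomial.eval₂RingHom
      (Polynomial.C : MvPolynomial (Fin n) F →+* Polynomial (MvPolynomial (Fin n) F))
      (Polynomial.X - Polynomial.C (MvPolynomial.C ρ)))
      (MvPolynomial.aeval
        (fun i => (Polynomial.X + Polynomial.C (MvPolynomial.C ρ)) * Polynomial.C (wsub f i))
        Q) =
      MvPolynomial.aeval (fun i => Polynomial.X * Polynomial.C (wsub f i)) Q := by
    rw [MvPolynomial.aeval_def, MvPolynomial.aeval_def, MvPolynomial.eval₂_comp_left]
    congr 1
    · ext a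
      simp [Polynomial.algebraMap_apply, MvPolynomial.algebraMap_eq]
    · funext i
      simp only [Function.comp_apply, Polynomial.coe_eval₂RingHom, Polynomial.eval₂_mul,
        Polynomial.eval₂_add, Polynomial.eval₂_X, Polynomial.eval₂_C]
      rw [sub_add_cancel]
  rw [e1, e2] at hmap
  exact hmap

/-- Degree bound for the substitution `x_i ↦ X · w i`. -/
lemma deg_le {F S : Type*} [CommRing F] [CommRing S] [Algebra F S] {σ : Type*} [Fintype σ]
    (w : σ → S) (Q : MvPolynomial σ F) :
    (MvPolynomial.aeval (fun i => Polynomial.X * Polynomial.C (w i)) Q).natDegree ≤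
      Q.totalDegree := by
  classical
  rw [MvPolynomial.aeval_def, MvPolynomial.eval₂_eq']
  apply Polynomial.natDegree_sum_le_of_forall_le
  intro α hα
  rw [prod_XC_pow w α]
  refine le_trans Polynomial.natDegree_mul_le ?_
  have hA : (algebraMap F (Polynomial S) (MvPolynomial.coeff α Q)).natDegree = 0 := by
    rw [Polynomial.algebraMap_apply]
    exact Polynomial.natDegree_C _
  rw [hA, zero_add]
  refine le_trans Polynomial.natDegree_mul_le ?_
  rw [Polynomial.natDegree_C, zero_add]
  refine le_trans Polynomial.natDegree_pow_le ?_
  have ht := MvPolynomial.le_totalDegree hα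
  rw [Finsupp.sum_fintype _ _ (fun _ => rfl)] at ht
  calc (∑ i, α i) * (Polynomial.X : Polynomial S).natDegree
      ≤ (∑ i, α i) * 1 := by gcongr; exact Polynomial.natDegree_X_le
    _ = ∑ i, α i := mul_one _
    _ ≤ Q.totalDegree := ht

/-- Injectivity: if `Q(X·s, X·f(s)) = 0` and `Q` is weighted-homogeneous, then `Q = 0`. -/
lemma inj_lemma {F : Type*} [Field F] {n ℓ m : ℕ} (hℓ : 2 ≤ ℓ)
    (f : MvPolynomial (Fin n) F) (hf0 : f ≠ 0) (Q : MvPolynomial (Fin (n + 1)) F)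
    (hexp : ∀ α ∈ Q.support, (∑ i : Fin (n + 1), if (i : ℕ) < n then α i else ℓ * α i) = m)
    (hG : MvPolynomial.aeval (fun i => Polynomial.X * Polynomial.C (wsub f i)) Q = 0) :
    Q = 0 := by
  classical
  obtain ⟨ℓ', rfl⟩ : ∃ ℓ', ℓ = ℓ' + 1 := ⟨ℓ - 1, by omega⟩
  by_contra hQ0
  obtain ⟨α₀, hα₀⟩ := MvPolynomial.support_nonempty.mpr hQ0
  set e := ∑ i, α₀ i with he
  set j := α₀ (Fin.last n) with hj
  -- the weighted sum identity
  have hws : ∀ α : Fin (n + 1) →₀ ℕ,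
      (∑ i : Fin (n + 1), if (i : ℕ) < n then α i else (ℓ' + 1) * α i) =
      (∑ i, α i) + ℓ' * α (Fin.last n) := by
    intro α
    have hsplit : ∀ i : Fin (n + 1),
        (if (i : ℕ) < n then α i else (ℓ' + 1) * α i) =
        α i + (if (i : ℕ) < n then 0 else ℓ' * α i) := by
      intro i
      by_cases hi : (i : ℕ) < n <;> simp [hi] <;> ring
    rw [Finset.sum_congr rfl (fun i _ => hsplit i), Finset.sum_add_distrib]
    congr 1
    rw [Finset.sum_eq_single_of_mem (Fin.last n) (Finset.mem_univ _)]
    · simp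
    · intro i _ hi
      simp [Fin.val_lt_last hi]
  -- all exponents with total degree e have the same last coordinate
  have hlast : ∀ α ∈ Q.support, (∑ i, α i) = e → α (Fin.last n) = j := by
    intro α hα hαe
    have h1 := hexp α hα
    have h2 := hexp α₀ hα₀
    rw [hws] at h1 h2
    rw [hαe] at h1
    rw [← he, ← hj] at h2
    have h3 : e + ℓ' * α (Fin.last n) = e + ℓ' * j := h1.trans h2.symm
    exact Nat.eq_of_mul_eq_mul_left (by omega) (Nat.add_left_cancel h3)
  -- the truncation of an exponent
  let trunc : (Fin (n + 1) →₀ ℕ) → (Fin n →₀ ℕ) := fun α =>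
    Finsupp.equivFunOnFinite.symm (fun i : Fin n => α i.castSucc)
  have htrunc_apply : ∀ (α : Fin (n + 1) →₀ ℕ) (i : Fin n), trunc α i = α i.castSucc :=
    fun α i => rfl
  -- product of substitutions is a monomial times a power of f
  have hprodw : ∀ α : Fin (n + 1) →₀ ℕ,
      ∏ i, wsub f i ^ α i =
        f ^ (α (Fin.last n)) * MvPolynomial.monomial (trunc α) 1 := by
    intro α
    rw [Fin.prod_univ_castSucc, wsub_last, mul_comm]
    congr 1
    rw [MvPolynomial.monomial_eq, map_one, one_mul, Finsupp.prod_pow]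
    exact Finset.prod_congr rfl (fun i _ => by rw [wsub_castSucc, htrunc_apply])
  -- compute the coefficient of X^e in G
  have hcoeff : (MvPolynomial.aeval
      (fun i => Polynomial.X * Polynomial.C (wsub f i)) Q).coeff e =
      ∑ α ∈ Q.support, if (∑ i, α i) = e then
        MvPolynomial.C (MvPolynomial.coeff α Q) * ∏ i, wsub f i ^ α i else 0 := by
    rw [MvPolynomial.aeval_def, MvPolynomial.eval₂_eq', Polynomial.finset_sum_coeff]
    refine Finset.sum_congr rfl (fun α _ => ?_)
    rw [prod_XC_pow (wsub f) α, Polynomial.algebraMap_apply, MvPolynomial.algebraMap_eq,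
      ← mul_assoc, ← Polynomial.C_mul, Polynomial.coeff_C_mul, Polynomial.coeff_X_pow]
    by_cases hsum : (∑ i, α i) = e
    · rw [if_pos hsum.symm, if_pos hsum, mul_one]
    · rw [if_neg (fun h => hsum h.symm), if_neg hsum, mul_zero]
  rw [hG, Polynomial.coeff_zero] at hcoeff
  -- rewrite the sum as f^j times a sum of monomials
  have hsum2 : f ^ j * (∑ α ∈ Q.support, if (∑ i, α i) = e then
      MvPolynomial.C (MvPolynomial.coeff α Q) * MvPolynomial.monomial (trunc α) 1 else 0) =
      ∑ α ∈ Q.support, if (∑ i, α i) = e then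
        MvPolynomial.C (MvPolynomial.coeff α Q) * ∏ i, wsub f i ^ α i else 0 := by
    rw [Finset.mul_sum]
    refine Finset.sum_congr rfl (fun α hα => ?_)
    by_cases hsum : (∑ i, α i) = e
    · rw [if_pos hsum, if_pos hsum, hprodw, hlast α hα hsum]
      ring
    · rw [if_neg hsum, if_neg hsum, mul_zero]
  have hfj : (f ^ j : MvPolynomial (Fin n) F) ≠ 0 := pow_ne_zero _ hf0
  have hT : ∑ α ∈ Q.support, (if (∑ i, α i) = e then
      MvPolynomial.C (MvPolynomial.coeff α Q) * MvPolynomial.monomial (trunc α) 1 else 0) = 0 := by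
    have h0 : f ^ j * (∑ α ∈ Q.support, if (∑ i, α i) = e then
        MvPolynomial.C (MvPolynomial.coeff α Q) * MvPolynomial.monomial (trunc α) 1 else 0) = 0 :=
      hsum2.trans hcoeff.symm
    rcases mul_eq_zero.mp h0 with h | h
    · exact absurd h hfj
    · exact h
  -- extract the coefficient at trunc α₀
  have hfinal := congrArg (MvPolynomial.coeff (trunc α₀)) hT
  rw [MvPolynomial.coeff_sum, MvPolynomial.coeff_zero] at hfinal
  rw [Finset.sum_eq_single_of_mem α₀ hα₀ ?side] at hfinal
  case side =>
    intro α hα hne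
    have hcoeffα : MvPolynomial.coeff (trunc α₀)
        (if (∑ i, α i) = e then
          MvPolynomial.C (MvPolynomial.coeff α Q) * MvPolynomial.monomial (trunc α) 1 else 0) =
        if (∑ i, α i) = e then
          MvPolynomial.coeff (trunc α₀)
            (MvPolynomial.C (MvPolynomial.coeff α Q) * MvPolynomial.monomial (trunc α) 1)
        else 0 := by
      split <;> simp
    rw [hcoeffα]
    by_cases hsum : (∑ i, α i) = e
    · have hne2 : trunc α ≠ trunc α₀ := by
        intro hteq
        apply hne
        ext i
        refine Fin.lastCases ?_ (fun i' => ?_) i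
        · rw [hlast α hα hsum, hj]
        · have h5 := DFunLike.congr_fun hteq i'
          rw [htrunc_apply, htrunc_apply] at h5
          exact h5
      rw [if_pos hsum, MvPolynomial.C_mul_monomial, mul_one, MvPolynomial.coeff_monomial,
        if_neg hne2]
    · rw [if_neg hsum]
  rw [if_pos he.symm, MvPolynomial.C_mul_monomial, mul_one,
    MvPolynomial.coeff_monomial, if_pos rfl] at hfinal
  exact MvPolynomial.mem_support_iff.mp hα₀ hfinal

/-- Proposition 1.3: if `Q ∈ F_q[x_1,…,x_n]` has degree `d < k(q-1)`, every exponent `α`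
of `Q` satisfies `α_1 + ⋯ + α_{n-1} + ℓ α_n = m`, and for every nonzero `ρ` and every `β`
with `|β| < k` the polynomial `Q^{(β)}(ρ·(s, f(s)))` is identically zero (`f` homogeneous
of degree `ℓ ≥ 2`), then `Q` is the zero polynomial. -/
theorem homogeneous_brk_proposition {F : Type*} [Field F] [Fintype F] (q n : ℕ)
    (hq : Fintype.card F = q) (hn : 2 ≤ n) (ℓ m : ℕ) (hℓ : 2 ≤ ℓ)
    (Q : MvPolynomial (Fin n) F) (d : ℕ) (hd : Q.totalDegree = d)
    (hexp : ∀ α ∈ Q.support, (∑ i : Fin n, if (i : ℕ) < n - 1 then α i else ℓ * α i) = m)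
    (f : MvPolynomial (Fin (n - 1)) F) (hf0 : f ≠ 0) (hf : f.IsHomogeneous ℓ)
    (k : ℕ) (hdk : d < k * (q - 1))
    (hQ : ∀ ρ : F, ρ ≠ 0 → ∀ β : Fin n →₀ ℕ, (∑ i : Fin n, β i) < k →
      MvPolynomial.aeval (fun i : Fin n =>
          if hi : (i : ℕ) < n - 1 then MvPolynomial.C ρ * MvPolynomial.X (⟨i, hi⟩ : Fin (n - 1))
          else MvPolynomial.C ρ * f)
        (hasseDeriv β Q) = 0) :
    Q = 0 := by
  classical
  obtain ⟨n', rfl⟩ : ∃ n', n = n' + 1 := ⟨n - 1, by omega⟩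
  have hfun : ∀ ρ : F, (fun i : Fin (n' + 1) =>
      if hi : (i : ℕ) < n' then MvPolynomial.C ρ * MvPolynomial.X (⟨i, hi⟩ : Fin n')
      else MvPolynomial.C ρ * f) = (fun i => MvPolynomial.C ρ * wsub f i) := by
    intro ρ
    funext i
    by_cases hi : (i : ℕ) < n' <;> simp [wsub, hi]
  have hdvd : ∀ ρ : F, ρ ≠ 0 →
      (Polynomial.X - Polynomial.C (MvPolynomial.C ρ)) ^ k ∣
        MvPolynomial.aeval (fun i => Polynomial.X * Polynomial.C (wsub f i)) Q := by
    intro ρ hρ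
    apply hasse_dvd
    intro β hβ
    rw [← hfun ρ]
    exact hQ ρ hρ β hβ
  have hprod : (∏ ρ ∈ Finset.univ.erase (0 : F),
      (Polynomial.X - Polynomial.C (MvPolynomial.C ρ)) ^ k) ∣
        MvPolynomial.aeval (fun i => Polynomial.X * Polynomial.C (wsub f i)) Q := by
    apply Finset.prod_dvd_of_coprime
    · intro a ha b hb hab
      simp only [Function.onFun]
      apply IsCoprime.pow
      have hne : (b : F) - a ≠ 0 := sub_ne_zero.mpr (Ne.symm hab)
      refine ⟨Polynomial.C (MvPolynomial.C ((b - a)⁻¹)),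
        -Polynomial.C (MvPolynomial.C ((b - a)⁻¹)), ?_⟩
      have h2 : Polynomial.C ((MvPolynomial.C ((b - a)⁻¹) : MvPolynomial (Fin (n' + 1 - 1)) F)) *
          (Polynomial.X - Polynomial.C (MvPolynomial.C a)) +
          -Polynomial.C (MvPolynomial.C ((b - a)⁻¹)) *
          (Polynomial.X - Polynomial.C (MvPolynomial.C b)) =
          Polynomial.C (MvPolynomial.C ((b - a)⁻¹)) * Polynomial.C (MvPolynomial.C (b - a)) := by
        rw [map_sub, map_sub]
        ring
      rw [h2, ← map_mul, ← map_mul, inv_mul_cancel₀ hne, map_one, map_one]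
    · intro ρ hρ
      exact hdvd ρ (Finset.ne_of_mem_erase hρ)
  have hG0 : MvPolynomial.aeval (fun i => Polynomial.X * Polynomial.C (wsub f i)) Q = 0 := by
    by_contra hGne
    have h1 := Polynomial.natDegree_le_of_dvd hprod hGne
    have h2 : (∏ ρ ∈ Finset.univ.erase (0 : F),
        (Polynomial.X - Polynomial.C (MvPolynomial.C ρ)
          : Polynomial (MvPolynomial (Fin (n' + 1 - 1)) F)) ^ k).natDegree = (q - 1) * k := by
      rw [Polynomial.natDegree_prod]
      · simp only [Polynomial.natDegree_pow, Polynomial.natDegree_X_sub_C, mul_one]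
        rw [Finset.sum_const, Finset.card_erase_of_mem (Finset.mem_univ _), Finset.card_univ,
          hq, smul_eq_mul]
      · intro ρ _
        exact pow_ne_zero _ (Polynomial.X_sub_C_ne_zero _)
    have h3 : (MvPolynomial.aeval
        (fun i => Polynomial.X * Polynomial.C (wsub f i)) Q).natDegree ≤ d := by
      rw [← hd]
      exact deg_le _ _
    rw [h2] at h1
    have h4 : (q - 1) * k = k * (q - 1) := Nat.mul_comm _ _
    linarith
  exact inj_lemma hℓ f hf0 Q hexp hG0
end

section
/- Let q be a prime power with q > 2, and let S ⊆ F_q^2 be a set such that for all ρ ∈ F_q there exists a ∈ F_q^2 with {a + ρ·(λ, λ²) : λ ∈ F_q} ⊆ S. Let k ∈ N be a multiple of q, let D = k(q-1) - 1 and M = 3k - 4k/q. Then binom(M+1, 2) · |S| ≥ binom(D+2, 2). -/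
/-!
For `ρ ≠ 0` the curve `{a + ρ(λ, λ²)}` is the parabola `ρ (y - a₂) = (x - a₁)²`, a graph over the
first coordinate with `q` points. Two such parabolas with different `ρ` meet in at most two points,
since eliminating `y` leaves a genuine quadratic in `x`. By inclusion–exclusion, `n` of them cover at
least `nq - n(n - 1)` points, which for `n = ⌈q/2⌉` gives `4|S| ≥ q(q + 1)`. Writing `k = qm`, the
binomial inequality then follows from `4C(C + 1) ≤ (3q - 4)² q(q + 1)` for `C = q(q - 1)`.
-/

open Finset Polynomial

theorem card_filter_quadratic_eq_zero_le_two {R : Type*} [CommRing R] [IsDomain R]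
    [DecidableEq R] {a : R} (ha : a ≠ 0) (b c : R) (s : Finset R) :
    #{x ∈ s | a * x ^ 2 + b * x + c = 0} ≤ 2 := by
  have hp : (C a * X ^ 2 + C b * X + C c).natDegree = 2 := natDegree_quadratic ha
  refine (card_le_degree_of_subset_roots fun x hx => ?_).trans hp.le
  rw [mem_roots (ne_zero_of_natDegree_gt (hp ▸ two_pos))]
  simpa using (mem_filter.mp hx).2

theorem card_mul_le_card_biUnion_add {ι α : Type*} [DecidableEq ι] [DecidableEq α]
    (T : Finset ι) (A : ι → Finset α) {c d : ℕ} (hc : ∀ i ∈ T, c ≤ #(A i))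
    (hd : ∀ i ∈ T, ∀ j ∈ T, i ≠ j → #(A i ∩ A j) ≤ d) :
    #T * c ≤ #(T.biUnion A) + d * (#T).choose 2 := by
  induction T using Finset.induction_on with
  | empty => simp
  | @insert i T hi ih =>
    have hT := ih (fun j hj => hc j (mem_insert_of_mem hj))
      (fun j hj l hl => hd j (mem_insert_of_mem hj) l (mem_insert_of_mem hl))
    have hinter : #(A i ∩ T.biUnion A) ≤ d * #T := calc
      #(A i ∩ T.biUnion A) = #(T.biUnion fun j => A i ∩ A j) := by rw [inter_biUnion]
      _ ≤ ∑ j ∈ T, #(A i ∩ A j) := card_biUnion_le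
      _ ≤ ∑ _j ∈ T, d := sum_le_sum fun j hj =>
        hd i (mem_insert_self i T) j (mem_insert_of_mem hj) (ne_of_mem_of_not_mem hj hi).symm
      _ = d * #T := by rw [sum_const, smul_eq_mul, mul_comm]
    have hunion := card_union_add_card_inter (A i) (T.biUnion A)
    have hAi := hc i (mem_insert_self i T)
    rw [biUnion_insert, card_insert_of_notMem hi, Nat.choose_succ_succ, Nat.choose_one_right]
    linarith

section Parabola

variable {F : Type*} [Field F] [Fintype F] [DecidableEq F]

def parabola (ρ : F) (a : F × F) : Finset (F × F) :=
  univ.image fun l => (a.1 + ρ * l, a.2 + ρ * l ^ 2)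

variable {ρ ρ' : F} {a a' : F × F}

theorem mem_parabola_iff (hρ : ρ ≠ 0) {p : F × F} :
    p ∈ parabola ρ a ↔ ρ * (p.2 - a.2) = (p.1 - a.1) ^ 2 := by
  constructor
  · simp only [parabola, mem_image, mem_univ, true_and]
    rintro ⟨l, rfl⟩
    ring
  · intro h
    refine mem_image.mpr ⟨(p.1 - a.1) / ρ, mem_univ _, Prod.ext ?_ ?_⟩
    · field_simp
      ring
    · field_simp
      linear_combination -h

theorem card_parabola (hρ : ρ ≠ 0) : #(parabola ρ a) = Fintype.card F := by
  refine (card_image_of_injective _ fun l l' h => ?_).trans card_univ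
  simpa [hρ] using congrArg Prod.fst h

theorem injOn_fst_parabola (hρ : ρ ≠ 0) : Set.InjOn Prod.fst (parabola ρ a : Set (F × F)) := by
  intro p hp p' hp' h
  rw [mem_coe, mem_parabola_iff hρ] at hp hp'
  refine Prod.ext h (mul_left_cancel₀ hρ ?_)
  linear_combination hp - hp' + (p.1 + p'.1 - 2 * a.1) * h

theorem card_parabola_inter_le_two (hρ : ρ ≠ 0) (hρ' : ρ' ≠ 0) (hne : ρ ≠ ρ') :
    #(parabola ρ a ∩ parabola ρ' a') ≤ 2 := by
  -- `ρ'·(ρ(y - a₂) = (x - a₁)²) - ρ·(ρ'(y - a₂') = (x - a₁')²)` is free of `y`.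
  refine (card_le_card_of_injOn Prod.fst (fun p hp => ?_)
    ((injOn_fst_parabola hρ).mono (coe_subset.mpr inter_subset_left))).trans
    (card_filter_quadratic_eq_zero_le_two (sub_ne_zero.mpr hne.symm) (2 * (ρ * a'.1 - ρ' * a.1))
      (ρ' * a.1 ^ 2 - ρ * a'.1 ^ 2 + ρ * ρ' * (a.2 - a'.2)) univ)
  obtain ⟨h, h'⟩ := mem_inter.mp hp
  rw [mem_parabola_iff hρ] at h
  rw [mem_parabola_iff hρ'] at h'
  refine mem_filter.mpr ⟨mem_univ _, ?_⟩
  linear_combination ρ * h' - ρ' * h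

theorem card_mul_succ_le_four_mul_card_of_parabola_subset (S : Finset (F × F))
    (hS : ∀ ρ : F, ρ ≠ 0 → ∃ a, parabola ρ a ⊆ S) :
    Fintype.card F * (Fintype.card F + 1) ≤ 4 * #S := by
  set q := Fintype.card F with hq_def
  have hq : 1 < q := Fintype.one_lt_card
  choose! a ha using hS
  -- `n = ⌈q/2⌉` maximises the inclusion–exclusion bound `n(q + 1 - n)`.
  obtain ⟨T, hT, hTcard⟩ : ∃ T ⊆ univ.erase (0 : F), #T = (q + 1) / 2 :=
    exists_subset_card_eq (by rw [card_erase_of_mem (mem_univ _), card_univ, ← hq_def]; omega)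
  have hT0 : ∀ ρ ∈ T, ρ ≠ 0 := fun ρ hρ => ne_of_mem_erase (hT hρ)
  have hunion := card_mul_le_card_biUnion_add T (fun ρ => parabola ρ (a ρ))
    (fun ρ hρ => (card_parabola (hT0 ρ hρ)).ge)
    (fun ρ hρ ρ' hρ' hne => card_parabola_inter_le_two (hT0 ρ hρ) (hT0 ρ' hρ') hne)
  have hsub : #(T.biUnion fun ρ => parabola ρ (a ρ)) ≤ #S :=
    card_le_card (biUnion_subset.mpr fun ρ hρ => ha ρ (hT0 ρ hρ))
  rw [hTcard, Nat.choose_two_right, Nat.two_mul_div_two_of_even (Nat.even_mul_pred_self _)]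
    at hunion
  obtain ⟨n, hn⟩ : ∃ n, (q + 1) / 2 = n + 1 := ⟨(q + 1) / 2 - 1, by omega⟩
  rw [hn, Nat.add_sub_cancel] at hunion
  rcases Nat.even_or_odd' q with ⟨m, hm | hm⟩
  · obtain rfl : m = n + 1 := by omega
    rw [hm]
    nlinarith
  · obtain rfl : m = n := by omega
    rw [hm]
    nlinarith

end Parabola

theorem choose_two_le_choose_two_mul {q s : ℕ} (m : ℕ) (hq : 2 ≤ q) (hs : q * (q + 1) ≤ 4 * s) :
    (m * (q * (q - 1)) + 1).choose 2 ≤ (m * (3 * q - 4) + 1).choose 2 * s := by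
  obtain ⟨r, rfl⟩ : ∃ r, q = r + 2 := ⟨q - 2, by omega⟩
  rw [show r + 2 - 1 = r + 1 by omega, show 3 * (r + 2) - 4 = 3 * r + 2 by omega]
  set C := (r + 2) * (r + 1)
  set B := m * (3 * r + 2)
  have hC : 4 * ((C + 1) * C) ≤ (3 * r + 2) ^ 2 * ((r + 2) * (r + 3)) :=
    calc 4 * ((C + 1) * C)
        ≤ 4 * ((C + 1) * C) + (r + 2) * r * (5 * r ^ 2 + 23 * r + 16) := Nat.le_add_right _ _
      _ = (3 * r + 2) ^ 2 * ((r + 2) * (r + 3)) := by ring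
  have key : 4 * ((m * C + 1) * (m * C)) ≤ 4 * ((B + 1) * B * s) :=
    calc 4 * ((m * C + 1) * (m * C))
        ≤ m ^ 2 * (4 * ((C + 1) * C)) := by nlinarith [Nat.le_mul_self m]
      _ ≤ m ^ 2 * ((3 * r + 2) ^ 2 * ((r + 2) * (r + 3))) := by gcongr
      _ ≤ m ^ 2 * ((3 * r + 2) ^ 2 * (4 * s)) := by gcongr
      _ = 4 * (B * B * s) := by ring
      _ ≤ 4 * ((B + 1) * B * s) := by gcongr; omega
  have hA := Nat.add_one_mul_choose_eq (m * C) 1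
  have hB := Nat.add_one_mul_choose_eq B 1
  rw [Nat.choose_one_right] at hA hB
  rw [hA, hB] at key
  linarith

theorem brk_warmup_dim_two_general {F : Type*} [Field F] [Fintype F] (q : ℕ)
    (hq : Fintype.card F = q)
    (S : Finset (F × F))
    (hS : ∀ ρ : F, ∃ a : F × F, ∀ lam : F, (a.1 + ρ * lam, a.2 + ρ * lam ^ 2) ∈ S)
    (k : ℕ) (hk : 0 < k) (hkq : q ∣ k)
    (D M : ℕ) (hD : D = k * (q - 1) - 1) (hM : M = 3 * k - 4 * k / q) :
    Nat.choose (D + 2) 2 ≤ Nat.choose (M + 1) 2 * S.card := by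
  classical
  obtain ⟨m, rfl⟩ := hkq
  have hq2 : 2 ≤ q := hq ▸ Fintype.one_lt_card
  have hS' : q * (q + 1) ≤ 4 * #S := hq ▸ card_mul_succ_le_four_mul_card_of_parabola_subset S
    fun ρ _ => (hS ρ).imp fun _ ha => image_subset_iff.mpr fun l _ => ha l
  have hDm : D + 2 = m * (q * (q - 1)) + 1 := by
    have : 0 < q * m * (q - 1) := Nat.mul_pos hk (by omega)
    rw [hD, show m * (q * (q - 1)) = q * m * (q - 1) by ring]
    omega
  have hMm : M + 1 = m * (3 * q - 4) + 1 := by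
    have h4 : 4 * (q * m) / q = 4 * m := by
      rw [Nat.mul_left_comm]
      exact Nat.mul_div_cancel_left _ (by omega)
    rw [hM, h4, Nat.mul_sub]
    ring_nf
  rw [hDm, hMm]
  exact choose_two_le_choose_two_mul m hq2 hS'

/-- Warm-up in `F_q^2` (Proposition 4.1): if `q > 2` and `S ⊆ F_q^2` contains, for every
`ρ ∈ F_q`, a set `{(a_1 + ρλ, a_2 + ρλ²) : λ ∈ F_q}`, then for every positive multiple `k`
of `q`, with `D = k(q-1) - 1` and `M = 3k - 4k/q`, we have
`binom(M+1, 2) · |S| ≥ binom(D+2, 2)`. -/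
theorem brk_warmup_dim_two {F : Type*} [Field F] [Fintype F] (q : ℕ)
    (hq : Fintype.card F = q) (hq2 : 2 < q)
    (S : Finset (F × F))
    (hS : ∀ ρ : F, ∃ a : F × F, ∀ lam : F, (a.1 + ρ * lam, a.2 + ρ * lam ^ 2) ∈ S)
    (k : ℕ) (hk : 0 < k) (hkq : q ∣ k)
    (D M : ℕ) (hD : D = k * (q - 1) - 1) (hM : M = 3 * k - 4 * k / q) :
    Nat.choose (D + 2) 2 ≤ Nat.choose (M + 1) 2 * S.card :=
  brk_warmup_dim_two_general q hq S hS k hk hkq D M hD hM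
end

section
/- Let q be a prime power and k, n ∈ N. Let I ⊆ Z_{≥0}^n be a set such that every α ∈ I satisfies |α| := α_1 + ⋯ + α_n < k(q-1), and such that the values |α| for α ∈ I are pairwise distinct. Let c_α ∈ F_q for α ∈ I, and let b ∈ F_q with b ≠ 0. Suppose that for every β ∈ Z_{≥0}^n with |β| < k and every nonzero ρ ∈ F_q, the value f_β(ρ) = Σ_{α ∈ I} b^{α_n - β_n} c_α binom(α, β) ρ^{|α| - |β|} is zero (where b^{α_n - β_n} is interpreted in F_q, negative exponents being inverses). Then c_α = 0 for all α ∈ I. -/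
/-!
Put `Q(X) = ∑_{α ∈ I} c_α b^{α_n} X^{|α|}`. Clearing the powers of `b` and `ρ` in `f_β(ρ)` and
summing over all `β` with `|β| = j`, Vandermonde's identity `∑_{|β| = j} binom(α, β) = binom(|α|, j)`
shows that the `j`-th Hasse derivative of `Q` vanishes at every `ρ ≠ 0` for `j < k`. So each of the
`q - 1` nonzero elements is a root of `Q` of multiplicity at least `k`, while `deg Q < k(q-1)`;
hence `Q = 0`, and since the `|α|` are distinct every coefficient `c_α b^{α_n}` vanishes.
-/

open Polynomial Finset

theorem Finset.sum_finsuppAntidiag_prod_choose {ι : Type*} [DecidableEq ι] (s : Finset ι)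
    (α : ι → ℕ) (j : ℕ) :
    ∑ l ∈ s.finsuppAntidiag j, ∏ i ∈ s, (α i).choose (l i) = (∑ i ∈ s, α i).choose j := by
  have hcoeff (m d : ℕ) :
      PowerSeries.coeff d ((1 + PowerSeries.X : PowerSeries ℕ) ^ m) = m.choose d := by
    rw [← Polynomial.coe_X, ← Polynomial.coe_one, ← Polynomial.coe_add, ← Polynomial.coe_pow,
      Polynomial.coeff_coe, coeff_one_add_X_pow, Nat.cast_id]
  have h := congrArg (PowerSeries.coeff j)
    (prod_pow_eq_pow_sum s α (1 + PowerSeries.X : PowerSeries ℕ))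
  simpa only [PowerSeries.coeff_prod, hcoeff] using h

theorem Polynomial.eval_hasseDeriv_monomial_mul_pow {R : Type*} [CommSemiring R]
    (j m : ℕ) (a r : R) :
    (hasseDeriv j (monomial m a)).eval r * r ^ j = a * m.choose j * r ^ m := by
  rw [hasseDeriv_monomial, eval_monomial]
  rcases le_or_gt j m with hjm | hmj
  · rw [mul_assoc, pow_sub_mul_pow r hjm]; ring
  · simp [Nat.choose_eq_zero_of_lt hmj]

theorem Polynomial.eval_hasseDeriv_sum_monomial_mul_pow {ι R : Type*} [Fintype ι] [DecidableEq ι]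
    [CommSemiring R] (I : Finset (ι → ℕ)) (a : (ι → ℕ) → R) (j : ℕ) (r : R) :
    (hasseDeriv j (∑ α ∈ I, monomial (∑ i, α i) (a α))).eval r * r ^ j =
      ∑ β ∈ univ.finsuppAntidiag j,
        ∑ α ∈ I, a α * (∏ i, (α i).choose (β i) : ℕ) * r ^ ∑ i, α i := by
  rw [map_sum, eval_finsetSum, sum_mul, sum_comm]
  refine sum_congr rfl fun α _ => ?_
  rw [eval_hasseDeriv_monomial_mul_pow, ← sum_finsuppAntidiag_prod_choose, Nat.cast_sum, mul_sum,
    sum_mul]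

theorem Polynomial.X_sub_C_pow_dvd_of_eval_hasseDeriv_eq_zero {R : Type*} [CommRing R]
    {p : R[X]} {r : R} {k : ℕ} (h : ∀ j < k, (hasseDeriv j p).eval r = 0) :
    (X - C r) ^ k ∣ p := by
  have hX : X ^ k ∣ taylor r p := X_pow_dvd_iff.2 fun j hj => by rw [taylor_coeff]; exact h j hj
  simpa [← sub_eq_add_neg, taylor_taylor] using _root_.map_dvd (taylorAlgHom (-r)) hX

theorem Polynomial.eq_zero_of_forall_pow_dvd_of_natDegree_lt {R : Type*} [CommRing R] [IsDomain R]
    {p : R[X]} (S : Finset R) (k : ℕ) (hdvd : ∀ r ∈ S, (X - C r) ^ k ∣ p)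
    (hdeg : p.natDegree < k * #S) : p = 0 := by
  classical
  by_contra hp
  have hroots : k • S.val ≤ p.roots := Multiset.le_iff_count.2 fun r => by
    rw [count_roots, Multiset.count_nsmul]
    by_cases hr : r ∈ S
    · rw [Multiset.count_eq_one_of_mem S.nodup hr, mul_one, le_rootMultiplicity_iff hp]
      exact hdvd r hr
    · simp [Multiset.count_eq_zero.2 hr]
  have := (Multiset.card_le_card hroots).trans (card_roots' p)
  simp only [Multiset.card_nsmul, card_val] at this
  omega

theorem Polynomial.coeff_sum_monomial_of_injOn {ι R : Type*} [Semiring R] {I : Finset ι}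
    {d : ι → ℕ} (hd : Set.InjOn d I) (a : ι → R) {i : ι} (hi : i ∈ I) :
    (∑ j ∈ I, monomial (d j) (a j)).coeff (d i) = a i := by
  classical
  rw [finsetSum_coeff, sum_eq_single_of_mem i hi fun j hj hji => ?_, coeff_monomial, if_pos rfl]
  rw [coeff_monomial, if_neg fun h => hji (hd hj hi h)]

/-- The key lemma (Lemma 3.1): let `I` be a set of exponents `α ∈ Z_{≥0}^n` with `|α| < k(q-1)`
and with the values `|α|` pairwise distinct, let `c_α ∈ F_q` and `b ∈ F_q` with `b ≠ 0`;
if for every `β` with `|β| < k` and every nonzero `ρ ∈ F_q` the value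
`f_β(ρ) = Σ_{α ∈ I} b^{α_n - β_n} c_α binom(α,β) ρ^{|α| - |β|}` is zero, then `c_α = 0`
for all `α ∈ I`. (Exponents of `b` and `ρ` are integers; negative powers are inverses.) -/
theorem brk_key_lemma {F : Type*} [Field F] [Fintype F] (q k n : ℕ)
    (hq : Fintype.card F = q) (hn : 0 < n)
    (I : Finset (Fin n → ℕ))
    (hIdeg : ∀ α ∈ I, (∑ i, α i) < k * (q - 1))
    (hIdist : ∀ α ∈ I, ∀ α' ∈ I, (∑ i, α i) = (∑ i, α' i) → α = α')
    (c : (Fin n → ℕ) → F) (b : F) (hb : b ≠ 0)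
    (hf : ∀ β : Fin n → ℕ, (∑ i, β i) < k → ∀ ρ : F, ρ ≠ 0 →
      ∑ α ∈ I,
        b ^ ((α ⟨n - 1, Nat.sub_lt hn Nat.one_pos⟩ : ℤ) - (β ⟨n - 1, Nat.sub_lt hn Nat.one_pos⟩ : ℤ)) *
          c α * ((∏ i, Nat.choose (α i) (β i) : ℕ) : F) *
          ρ ^ (((∑ i, α i : ℕ) : ℤ) - ((∑ i, β i : ℕ) : ℤ)) = 0) :
    ∀ α ∈ I, c α = 0 := by
  classical
  intro α₀ hα₀
  set last : Fin n := ⟨n - 1, Nat.sub_lt hn Nat.one_pos⟩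
  set Q : F[X] := ∑ α ∈ I, monomial (∑ i, α i) (c α * b ^ α last)
  -- Multiplying `f_β(ρ)` by `b ^ β_n * ρ ^ |β|` clears the integer exponents.
  have hcleared (β : Fin n → ℕ) (hβ : ∑ i, β i < k) (ρ : F) (hρ : ρ ≠ 0) :
      ∑ α ∈ I, c α * b ^ α last * (∏ i, (α i).choose (β i) : ℕ) * ρ ^ ∑ i, α i = 0 := by
    have h := congrArg (· * (b ^ β last * ρ ^ ∑ i, β i)) (hf β hβ ρ hρ)
    simp only [zero_mul, sum_mul, zpow_sub₀ hb, zpow_sub₀ hρ, zpow_natCast] at h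
    rw [← h]
    refine sum_congr rfl fun α _ => ?_
    field_simp
  have hhasse (j : ℕ) (hj : j < k) (ρ : F) (hρ : ρ ≠ 0) : (hasseDeriv j Q).eval ρ = 0 := by
    have h := eval_hasseDeriv_sum_monomial_mul_pow I (fun α => c α * b ^ α last) j ρ
    have h0 := h.trans (sum_eq_zero fun β hβ =>
      hcleared β (by simpa [(mem_finsuppAntidiag.1 hβ).1] using hj) ρ hρ)
    exact (mul_eq_zero.1 h0).resolve_right (pow_ne_zero j hρ)
  have hQ : Q = 0 := by
    refine eq_zero_of_forall_pow_dvd_of_natDegree_lt (univ.erase 0) k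
      (fun ρ hρ => X_sub_C_pow_dvd_of_eval_hasseDeriv_eq_zero fun j hj =>
        hhasse j hj ρ (ne_of_mem_erase hρ)) ?_
    rw [card_erase_of_mem (mem_univ 0), card_univ, hq]
    have hpos := hIdeg α₀ hα₀
    have hdeg : Q.natDegree ≤ k * (q - 1) - 1 := natDegree_sum_le_of_forall_le _ _ fun α hα =>
      (natDegree_monomial_le _).trans (Nat.le_sub_one_of_lt (hIdeg α hα))
    omega
  have hcoeff := coeff_sum_monomial_of_injOn (fun α hα α' hα' => hIdist α hα α' hα')
    (fun α => c α * b ^ α last) hα₀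
  change Q.coeff _ = _ at hcoeff
  rw [hQ, coeff_zero] at hcoeff
  exact (mul_eq_zero.1 hcoeff.symm).resolve_right (pow_ne_zero _ hb)
end

section
/- Let F_q be a finite field, P ∈ F_q[x_1,…,x_n], and let h = (h_1,…,h_n) be an n-tuple of univariate polynomials in F_q[t]. Then for every λ ∈ F_q, mult(P ∘ h, λ) ≥ mult(P, h(λ)), where P ∘ h ∈ F_q[t] is the univariate polynomial obtained by substituting h_i for x_i. -/
open MvPolynomial

/-- The multiplicity of `P` at a point `a`: the largest `M` such that all Hasse derivatives of
order `< M` vanish at `a` (`∞` if no largest such `M` exists). -/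
noncomputable def mult {F : Type*} [CommRing F] {n : ℕ}
    (P : MvPolynomial (Fin n) F) (a : Fin n → F) : ℕ∞ :=
  sSup {M : ℕ∞ | ∀ β : Fin n →₀ ℕ, ((∑ i, β i : ℕ) : ℕ∞) < M →
    MvPolynomial.eval a (hasseDeriv β P) = 0}

/-- The multiplicity of a univariate polynomial at a point, via Hasse derivatives. -/
noncomputable def multU {F : Type*} [CommRing F] (P : Polynomial F) (a : F) : ℕ∞ :=
  sSup {M : ℕ∞ | ∀ j : ℕ, (j : ℕ∞) < M → Polynomial.eval a (Polynomial.hasseDeriv j P) = 0}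

lemma aeval_eq_sum' {F : Type*} [CommRing F] {n : ℕ} (P : MvPolynomial (Fin n) F)
    (h : Fin n → Polynomial F) (a : Fin n → F) :
    MvPolynomial.aeval h P =
      ∑ β ∈ (MvPolynomial.eval₂ ((MvPolynomial.C).comp (MvPolynomial.C))
          (fun i => MvPolynomial.C (MvPolynomial.X i) + MvPolynomial.X i) P).support,
        Polynomial.C (MvPolynomial.eval a (hasseDeriv β P)) *
          ∏ i, (h i - Polynomial.C (a i)) ^ β i := by
  set ψ : MvPolynomial (Fin n) (MvPolynomial (Fin n) F) →+* Polynomial F :=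
    MvPolynomial.eval₂Hom (Polynomial.C.comp (MvPolynomial.eval a))
      (fun i => h i - Polynomial.C (a i)) with hψ
  have key : MvPolynomial.aeval h P =
      ψ (MvPolynomial.eval₂ ((MvPolynomial.C).comp (MvPolynomial.C))
        (fun i => MvPolynomial.C (MvPolynomial.X i) + MvPolynomial.X i) P) := by
    rw [MvPolynomial.eval₂_comp_left ψ]
    rw [MvPolynomial.aeval_def, MvPolynomial.eval₂_eq, MvPolynomial.eval₂_eq]
    apply Finset.sum_congr rfl
    intro d _
    congr 1
    · simp [hψ]
    · apply Finset.prod_congr rfl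
      intro i _
      congr 1
      simp [hψ]
  rw [key, hψ, MvPolynomial.coe_eval₂Hom, MvPolynomial.eval₂_eq']
  rfl

/-- Lemma 2.3: for `h = (h_1, …, h_n)` a tuple of univariate polynomials and `λ ∈ F_q`,
`mult(P ∘ h, λ) ≥ mult(P, h(λ))`. -/
theorem mult_comp_ge {F : Type*} [Field F] [Fintype F] {n : ℕ}
    (P : MvPolynomial (Fin n) F) (h : Fin n → Polynomial F) (lam : F) :
    mult P (fun i => (h i).eval lam) ≤ multU (MvPolynomial.aeval h P) lam := by
  set a : Fin n → F := fun i => (h i).eval lam with ha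
  apply sSup_le_sSup
  intro M hM j hj
  rw [← Polynomial.taylor_coeff, aeval_eq_sum' P h a, map_sum, Polynomial.finset_sum_coeff]
  apply Finset.sum_eq_zero
  intro β _
  rcases le_or_gt (∑ i, β i) j with hle | hlt
  · have hz : MvPolynomial.eval a (hasseDeriv β P) = 0 := by
      apply hM
      exact lt_of_le_of_lt (by exact_mod_cast hle) hj
    simp [hz]
  · have hdvd : (Polynomial.X - Polynomial.C lam) ^ (∑ i, β i) ∣
        ∏ i, (h i - Polynomial.C (a i)) ^ β i := by
      rw [← Finset.prod_pow_eq_pow_sum]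
      apply Finset.prod_dvd_prod_of_dvd
      intro i _
      apply pow_dvd_pow_of_dvd
      apply Polynomial.dvd_iff_isRoot.mpr
      simp [Polynomial.IsRoot, ha]
    obtain ⟨g, hg⟩ := hdvd
    rw [hg, ← mul_assoc, mul_comm (Polynomial.C _) _, mul_assoc, Polynomial.taylor_mul]
    have hx : Polynomial.taylor lam ((Polynomial.X - Polynomial.C lam) ^ (∑ i, β i)) =
        Polynomial.X ^ (∑ i, β i) := by
      simp [Polynomial.taylor_apply, Polynomial.pow_comp, Polynomial.sub_comp]
    rw [hx, Polynomial.coeff_X_pow_mul']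
    simp [Nat.not_le.mpr hlt]
end

section
/- Let F_q be a finite field, A ⊆ F_q^n, and D, M ∈ N. If binom(M+n-1, n) · |A| < binom(D+n, n), then there exists a nonzero polynomial P ∈ F_q[x_1,…,x_n] of degree at most D that vanishes on A with multiplicity M (i.e., mult(P, a) ≥ M for all a ∈ A). -/
/-! Parameter counting. Exponent vectors of total degree at most `d` in `n` variables are
counted by stars and bars and the hockey-stick identity: there are `binom(d + n, n)` of them.
So the polynomials of degree at most `D` form a space of dimension `binom(D + n, n)`, while
vanishing to order `M` at a point `a` is the `binom(M + n - 1, n)` linear conditions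
`P^(β)(a) = 0`, `|β| < M`. With fewer conditions than dimensions, a nonzero solution exists. -/

open MvPolynomial

open Finset Module

theorem Nat.sum_range_add_sub_one_choose (s d : ℕ) :
    ∑ k ∈ range (d + 1), (s + k - 1).choose k = (d + s).choose s := by
  induction d with
  | zero => simp
  | succ d ih =>
    rw [sum_range_succ, ih, show s + (d + 1) - 1 = d + s by omega, ← Nat.choose_symm_add,
      ← Nat.choose_symm_add, show d + 1 + s = d + s + 1 by omega,
      Nat.choose_succ_succ']

section DegreeLE

variable (σ : Type*) [Fintype σ] [DecidableEq σ]

noncomputable def degreeLE (d : ℕ) : Finset (σ →₀ ℕ) :=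
  (range (d + 1)).biUnion (univ.finsuppAntidiag ·)

variable {σ}

theorem mem_degreeLE {d : ℕ} {β : σ →₀ ℕ} : β ∈ degreeLE σ d ↔ ∑ i, β i ≤ d := by
  simp [degreeLE]

theorem card_degreeLE (d : ℕ) :
    #(degreeLE σ d) = (d + Fintype.card σ).choose (Fintype.card σ) := by
  have hdisj : (range (d + 1) : Set ℕ).PairwiseDisjoint
      fun k => (univ : Finset σ).finsuppAntidiag k :=
    fun k _ l _ hkl => disjoint_left.mpr fun β hk hl => hkl <| by
      rw [mem_finsuppAntidiag] at hk hl
      rw [← hk.1, hl.1]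
  rw [degreeLE, card_biUnion hdisj]
  simp only [card_finsuppAntidiag_nat_eq_choose, card_univ, Nat.sum_range_add_sub_one_choose]

theorem restrictTotalDegree_eq_restrictSupport_degreeLE (R : Type*) [CommSemiring R] (d : ℕ) :
    restrictTotalDegree σ R d = restrictSupport R ↑(degreeLE σ d) := by
  rw [restrictTotalDegree]
  congr 1
  ext β
  simp [mem_degreeLE, Finsupp.sum_fintype]

theorem finrank_restrictTotalDegree (R : Type*) [CommRing R] [StrongRankCondition R] (d : ℕ) :
    finrank R (restrictTotalDegree σ R d) = (d + Fintype.card σ).choose (Fintype.card σ) := by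
  rw [restrictTotalDegree_eq_restrictSupport_degreeLE,
    finrank_eq_card_basis (basisRestrictSupport R _)]
  simp only [coe_sort_coe, Fintype.card_coe, card_degreeLE]

end DegreeLE

theorem exists_ne_zero_forall_eq_zero_of_card_lt_finrank {K V ι : Type*} [Field K]
    [AddCommGroup V] [Module K V] [Fintype ι] (ℓ : ι → V →ₗ[K] K)
    (h : Fintype.card ι < finrank K V) : ∃ v ≠ 0, ∀ i, ℓ i v = 0 := by
  have : Module.Finite K V := finite_of_finrank_pos (Nat.zero_lt_of_lt h)
  have hker : LinearMap.ker (LinearMap.pi ℓ) ≠ ⊥ :=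
    LinearMap.ker_ne_bot_of_finrank_lt (by rwa [finrank_fintype_fun_eq_card])
  obtain ⟨v, hv, hv0⟩ := (Submodule.ne_bot_iff _).mp hker
  exact ⟨v, hv0, fun i => congrFun hv i⟩

noncomputable def evalHasseDeriv {F : Type*} [CommRing F] {n : ℕ} (β : Fin n →₀ ℕ)
    (a : Fin n → F) : MvPolynomial (Fin n) F →ₗ[F] F where
  toFun P := eval a (hasseDeriv β P)
  map_add' P Q := by simp [hasseDeriv, eval₂_add, coeff_add]
  map_smul' c P := by
    simp [hasseDeriv, smul_eq_C_mul, eval₂_mul, coeff_C_mul]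

theorem le_mult_of_eval_hasseDeriv_eq_zero {F : Type*} [CommRing F] {n : ℕ}
    {P : MvPolynomial (Fin n) F} {a : Fin n → F} {M : ℕ}
    (h : ∀ β : Fin n →₀ ℕ, ∑ i, β i < M → eval a (hasseDeriv β P) = 0) :
    (M : ℕ∞) ≤ mult P a :=
  le_sSup fun β hβ => h β (by exact_mod_cast hβ)

theorem exists_poly_vanishing_with_multiplicity_general {F : Type*} [Field F] {n : ℕ}
    (A : Finset (Fin n → F)) (D M : ℕ)
    (h : Nat.choose (M + n - 1) n * A.card < Nat.choose (D + n) n) :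
    ∃ P : MvPolynomial (Fin n) F, P ≠ 0 ∧ P.totalDegree ≤ D ∧
      ∀ a ∈ A, (M : ℕ∞) ≤ mult P a := by
  classical
  cases M with
  | zero => exact ⟨1, one_ne_zero, by simp, fun a _ => by simp⟩
  | succ m =>
    let V := restrictTotalDegree (Fin n) F D
    let ℓ : A × degreeLE (Fin n) m → V →ₗ[F] F :=
      fun c => (evalHasseDeriv c.2.1 c.1.1).comp V.subtype
    obtain ⟨⟨P, hPV⟩, hP0, hP⟩ := exists_ne_zero_forall_eq_zero_of_card_lt_finrank ℓ <| by
      rw [finrank_restrictTotalDegree, Fintype.card_prod, Fintype.card_coe, Fintype.card_coe,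
        card_degreeLE, Fintype.card_fin, mul_comm]
      simpa using h
    refine ⟨P, by simpa using hP0, (mem_restrictTotalDegree _ _ _).mp hPV, fun a ha => ?_⟩
    exact le_mult_of_eval_hasseDeriv_eq_zero fun β hβ =>
      hP (⟨a, ha⟩, ⟨β, mem_degreeLE.mpr (Nat.le_of_lt_succ hβ)⟩)

/-- Lemma 2.4: if `binom(M+n-1, n) · |A| < binom(D+n, n)`, then there is a nonzero polynomial
of degree at most `D` vanishing on `A` with multiplicity `M`. -/
theorem exists_poly_vanishing_with_multiplicity {F : Type*} [Field F] [Fintype F] {n : ℕ}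
    (A : Finset (Fin n → F)) (D M : ℕ)
    (h : Nat.choose (M + n - 1) n * A.card < Nat.choose (D + n) n) :
    ∃ P : MvPolynomial (Fin n) F, P ≠ 0 ∧ P.totalDegree ≤ D ∧
      ∀ a ∈ A, (M : ℕ∞) ≤ mult P a :=
  exists_poly_vanishing_with_multiplicity_general A D M h
end

section
/- Let F_q be a finite field, A ⊆ F_q a finite subset, and let P ∈ F_q[x_1,…,x_n] be a nonzero polynomial of degree d. Then Σ_{a ∈ A^n} mult(P, a) ≤ d·|A|^{n-1}. -/
open MvPolynomial

/-!
The multiplicity of `P` at `a` is the lowest total degree of a monomial of `P(a + y)`, i.e. the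
order of that polynomial as a power series. Induct on `n`, viewing `P` as a polynomial of degree `t`
in the first variable with leading coefficient `Pₜ` in the remaining ones. For fixed `a`, choose
`γ` with `|γ| = mult(Pₜ, a)` and `y^γ` occurring in `Pₜ(a + y)`. The coefficient `c(x)` of `y^γ`
in `P(x, a + y)` is then a nonzero polynomial of degree at most `t`, and its Taylor expansion at
`b` gives `mult(P, (b, a)) ≤ |γ| + mult_b(c)`. Summing over `b ∈ A` bounds the line sum by
`|A| · mult(Pₜ, a) + t`; the induction hypothesis for `Pₜ` and `deg Pₜ + t ≤ deg P` finish.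
-/

namespace SchwartzZippel

open Finset
open scoped Polynomial

variable {R : Type*} [CommRing R]

section Shift

variable {σ : Type*}

noncomputable def shift (a : σ → R) : MvPolynomial σ R →ₐ[R] MvPolynomial σ R :=
  aeval fun i => C (a i) + X i

lemma shift_shift (a b : σ → R) (P : MvPolynomial σ R) :
    shift a (shift b P) = shift (a + b) P := by
  rw [← AlgHom.comp_apply]
  congr 1
  ext i
  simp [shift, add_left_comm, add_assoc]

lemma shift_ne_zero {a : σ → R} {P : MvPolynomial σ R} (hP : P ≠ 0) : shift a P ≠ 0 := by
  intro h
  apply hP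
  have := shift_shift (-a) a P
  simp_all [shift]

end Shift

variable {n : ℕ}

lemma eval_hasseDeriv (a : Fin n → R) (β : Fin n →₀ ℕ) (P : MvPolynomial (Fin n) R) :
    eval a (hasseDeriv β P) = coeff β (shift a P) := by
  rw [hasseDeriv, ← coeff_map, ← coe_eval₂Hom, ← RingHom.comp_apply]
  congr 2
  apply ringHom_ext <;> simp [shift]

lemma mult_eq_order (P : MvPolynomial (Fin n) R) (a : Fin n → R) :
    mult P a = (shift a P : MvPowerSeries (Fin n) R).order := by
  apply le_antisymm
  · refine sSup_le fun M hM => MvPowerSeries.le_order fun β hβ => ?_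
    rw [coeff_coe, ← eval_hasseDeriv]
    exact hM β (by rwa [Finsupp.degree_eq_sum] at hβ)
  · refine le_sSup fun β hβ => ?_
    rw [eval_hasseDeriv, ← coeff_coe]
    exact MvPowerSeries.coeff_of_lt_order (by rwa [Finsupp.degree_eq_sum])

lemma mult_le_of_coeff_shift_ne_zero {P : MvPolynomial (Fin n) R} {a : Fin n → R}
    {β : Fin n →₀ ℕ} (h : coeff β (shift a P) ≠ 0) : mult P a ≤ β.degree := by
  rw [mult_eq_order]
  exact MvPowerSeries.order_le (by rwa [coeff_coe])

lemma exists_coeff_shift_ne_zero {P : MvPolynomial (Fin n) R} (hP : P ≠ 0) (a : Fin n → R) :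
    ∃ β : Fin n →₀ ℕ, coeff β (shift a P) ≠ 0 ∧ mult P a = β.degree := by
  have hfin := MvPowerSeries.ne_zero_iff_order_finite.mp
    ((coe_eq_zero_iff (φ := shift a P)).not.mpr (shift_ne_zero hP))
  obtain ⟨β, hβ, hdeg⟩ := MvPowerSeries.exists_coeff_ne_zero_and_order hfin
  exact ⟨β, by rwa [coeff_coe] at hβ, by rw [mult_eq_order, hdeg]⟩

section Swap

variable {σ : Type*}

noncomputable def swapPolynomial : (MvPolynomial σ R)[X] →+* MvPolynomial σ R[X] :=
  Polynomial.eval₂RingHom (map Polynomial.C) (C Polynomial.X)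

lemma coeff_coeff_swapPolynomial (q : (MvPolynomial σ R)[X]) (γ : σ →₀ ℕ) (j : ℕ) :
    ((swapPolynomial q).coeff γ).coeff j = (q.coeff j).coeff γ := by
  induction q using Polynomial.induction_on' with
  | add p q hp hq => simp [hp, hq]
  | monomial k r =>
    rw [swapPolynomial, Polynomial.coe_eval₂RingHom, Polynomial.eval₂_monomial, ← C_pow,
      mul_comm, coeff_C_mul, coeff_map, mul_comm, Polynomial.coeff_C_mul_X_pow,
      Polynomial.coeff_monomial]
    by_cases h : j = k <;> simp [h, eq_comm]

lemma comp_coeff_swapPolynomial (q : (MvPolynomial σ R)[X]) (γ : σ →₀ ℕ) (b : R) :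
    ((swapPolynomial q).coeff γ).comp (Polynomial.X + Polynomial.C b)
      = (swapPolynomial (q.comp (Polynomial.X + Polynomial.C (C b)))).coeff γ := by
  have : (map (Polynomial.compRingHom (Polynomial.X + Polynomial.C b))).comp
      (swapPolynomial : (MvPolynomial σ R)[X] →+* _)
      = swapPolynomial.comp (Polynomial.compRingHom (Polynomial.X + Polynomial.C (C b))) := by
    apply Polynomial.ringHom_ext
    · intro r
      simp only [RingHom.comp_apply, swapPolynomial, Polynomial.coe_eval₂RingHom,
        Polynomial.coe_compRingHom_apply, Polynomial.C_comp, Polynomial.eval₂_C]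
      rw [MvPolynomial.map_map]
      exact congrArg (MvPolynomial.map · r) (RingHom.ext fun _ => Polynomial.C_comp)
    · simp [swapPolynomial]
  simpa [coeff_map] using congrArg (coeff γ) (RingHom.congr_fun this q)

end Swap

lemma finSuccEquiv_shift_cons (P : MvPolynomial (Fin (n + 1)) R) (b : R) (a : Fin n → R) :
    finSuccEquiv R n (shift (Fin.cons b a) P)
      = ((finSuccEquiv R n P).map (shift a)).comp (Polynomial.X + Polynomial.C (C b)) := by
  let φ : MvPolynomial (Fin (n + 1)) R →+* (MvPolynomial (Fin n) R)[X] := finSuccEquiv R n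
  have : φ.comp (shift (Fin.cons b a))
      = (Polynomial.compRingHom (Polynomial.X + Polynomial.C (C b))).comp
          ((Polynomial.mapRingHom (shift a : MvPolynomial (Fin n) R →+* _)).comp φ) := by
    apply ringHom_ext
    · intro r; simp [φ, shift, finSuccEquiv_apply]
    · intro i
      cases i using Fin.cases <;> simp [φ, shift, finSuccEquiv_apply, add_comm]
  exact RingHom.congr_fun this P

/-- The coefficient of `y^γ` in `P(x, a + y)`, as a polynomial in `x`. -/
noncomputable def lineCoeff (P : MvPolynomial (Fin (n + 1)) R) (a : Fin n → R)
    (γ : Fin n →₀ ℕ) : R[X] :=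
  (swapPolynomial ((finSuccEquiv R n P).map (shift a))).coeff γ

lemma coeff_lineCoeff (P : MvPolynomial (Fin (n + 1)) R) (a : Fin n → R) (γ : Fin n →₀ ℕ)
    (j : ℕ) : (lineCoeff P a γ).coeff j = coeff γ (shift a ((finSuccEquiv R n P).coeff j)) := by
  rw [lineCoeff, coeff_coeff_swapPolynomial, Polynomial.coeff_map]
  rfl

lemma coeff_shift_cons (P : MvPolynomial (Fin (n + 1)) R) (b : R) (a : Fin n → R)
    (γ : Fin n →₀ ℕ) (r : ℕ) :
    coeff (γ.cons r) (shift (Fin.cons b a) P)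
      = ((lineCoeff P a γ).comp (Polynomial.X + Polynomial.C b)).coeff r := by
  rw [← finSuccEquiv_coeff_coeff, finSuccEquiv_shift_cons, lineCoeff, comp_coeff_swapPolynomial,
    coeff_coeff_swapPolynomial]

lemma mult_cons_le_add_rootMultiplicity {P : MvPolynomial (Fin (n + 1)) R} {a : Fin n → R}
    {γ : Fin n →₀ ℕ} (h : lineCoeff P a γ ≠ 0) (b : R) :
    mult P (Fin.cons b a) ≤ γ.degree + (lineCoeff P a γ).rootMultiplicity b := by
  have hcoeff : coeff (γ.cons ((lineCoeff P a γ).rootMultiplicity b)) (shift (Fin.cons b a) P)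
      ≠ 0 := by
    rw [coeff_shift_cons, Polynomial.rootMultiplicity_eq_natTrailingDegree,
      ← Polynomial.trailingCoeff, Ne, Polynomial.trailingCoeff_eq_zero,
      Polynomial.comp_X_add_C_eq_zero_iff]
    exact h
  refine (mult_le_of_coeff_shift_ne_zero hcoeff).trans_eq ?_
  simp [Finsupp.degree_eq_sum, Fin.sum_univ_succ, add_comm]

lemma sum_piFinset_succ {α M : Type*} [AddCommMonoid M] {n : ℕ} (A : Finset α)
    (g : (Fin (n + 1) → α) → M) :
    ∑ x ∈ Fintype.piFinset (fun _ => A), g x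
      = ∑ a ∈ Fintype.piFinset (fun _ : Fin n => A), ∑ b ∈ A, g (Fin.cons b a) := by
  classical
  have h := filter_piFinset_eq_map_consEquiv (fun _ : Fin (n + 1) => A) fun _ => True
  simp only [filter_true] at h
  rw [h, sum_map, sum_product_right]
  rfl

section Domain

variable [IsDomain R]

lemma sum_rootMultiplicity_le_natDegree (A : Finset R) (p : R[X]) :
    ∑ b ∈ A, p.rootMultiplicity b ≤ p.natDegree := by
  classical
  calc ∑ b ∈ A, p.rootMultiplicity b = ∑ b ∈ A, p.roots.count b := by
        simp only [Polynomial.count_roots]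
    _ ≤ ∑ b ∈ A ∪ p.roots.toFinset, p.roots.count b := sum_le_sum_of_subset subset_union_left
    _ = Multiset.card p.roots := Multiset.sum_count_eq_card fun b hb => by simp [hb]
    _ ≤ p.natDegree := Polynomial.card_roots' p

lemma sum_mult_cons_le (A : Finset R) {P : MvPolynomial (Fin (n + 1)) R} (hP : P ≠ 0)
    (a : Fin n → R) :
    ∑ b ∈ A, mult P (Fin.cons b a)
      ≤ #A * mult (finSuccEquiv R n P).leadingCoeff a + (finSuccEquiv R n P).natDegree := by
  set p := finSuccEquiv R n P
  have hp : p ≠ 0 := by simpa [p] using hP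
  obtain ⟨γ, hγ, hmult⟩ := exists_coeff_shift_ne_zero (Polynomial.leadingCoeff_ne_zero.mpr hp) a
  set c := lineCoeff P a γ
  have hc_top : c.coeff p.natDegree ≠ 0 := by rw [coeff_lineCoeff]; exact hγ
  have hc_deg : c.natDegree ≤ p.natDegree :=
    Polynomial.natDegree_le_iff_coeff_eq_zero.mpr fun j hj => by
      rw [coeff_lineCoeff, Polynomial.coeff_eq_zero_of_natDegree_lt hj, map_zero, coeff_zero]
  have hc : c ≠ 0 := fun h => hc_top (by rw [h, Polynomial.coeff_zero])
  calc ∑ b ∈ A, mult P (Fin.cons b a)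
      ≤ ∑ b ∈ A, ((γ.degree : ℕ∞) + c.rootMultiplicity b) :=
        sum_le_sum fun b _ => mult_cons_le_add_rootMultiplicity hc b
    _ = #A * (γ.degree : ℕ∞) + ((∑ b ∈ A, c.rootMultiplicity b : ℕ) : ℕ∞) := by
        rw [sum_add_distrib, sum_const, nsmul_eq_mul, Nat.cast_sum]
    _ ≤ #A * mult p.leadingCoeff a + p.natDegree := by
        rw [hmult]
        gcongr
        exact (sum_rootMultiplicity_le_natDegree A c).trans hc_deg

theorem sum_mult_le_totalDegree_mul (A : Finset R) :
    ∀ {n : ℕ} (P : MvPolynomial (Fin n) R), P ≠ 0 →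
      ∑ a ∈ Fintype.piFinset (fun _ : Fin n => A), mult P a
        ≤ ((P.totalDegree * #A ^ (n - 1) : ℕ) : ℕ∞)
  | 0, P, hP => by
    refine (sum_eq_zero fun a _ => ?_).trans_le bot_le
    obtain ⟨β, -, hβ⟩ := exists_coeff_shift_ne_zero hP a
    simpa [Finsupp.degree_eq_sum] using hβ
  | n + 1, P, hP => by
    set p := finSuccEquiv R n P
    have hlead : p.leadingCoeff ≠ 0 := Polynomial.leadingCoeff_ne_zero.mpr (by simpa [p] using hP)
    have hdeg : p.leadingCoeff.totalDegree + p.natDegree ≤ P.totalDegree :=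
      totalDegree_coeff_finSuccEquiv_add_le P p.natDegree hlead
    have hcard : #A * (p.leadingCoeff.totalDegree * #A ^ (n - 1))
        ≤ p.leadingCoeff.totalDegree * #A ^ n := by
      -- `n - 1` truncates at `n = 0`, where the leading coefficient is a constant.
      rcases eq_or_ne n 0 with rfl | hn
      · obtain ⟨r, hr⟩ := C_surjective (Fin 0) p.leadingCoeff
        simp [← hr]
      · rw [mul_left_comm, mul_pow_sub_one hn]
    calc ∑ x ∈ Fintype.piFinset (fun _ => A), mult P x
        = ∑ a ∈ Fintype.piFinset (fun _ : Fin n => A), ∑ b ∈ A, mult P (Fin.cons b a) :=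
          sum_piFinset_succ A _
      _ ≤ ∑ a ∈ Fintype.piFinset (fun _ : Fin n => A),
            (#A * mult p.leadingCoeff a + p.natDegree) :=
          sum_le_sum fun a _ => sum_mult_cons_le A hP a
      _ = #A * ∑ a ∈ Fintype.piFinset (fun _ : Fin n => A), mult p.leadingCoeff a
            + ((#A ^ n * p.natDegree : ℕ) : ℕ∞) := by
          rw [sum_add_distrib, ← mul_sum, sum_const, Fintype.card_piFinset_const, nsmul_eq_mul]
          push_cast
          rfl
      _ ≤ #A * ((p.leadingCoeff.totalDegree * #A ^ (n - 1) : ℕ) : ℕ∞)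
            + ((#A ^ n * p.natDegree : ℕ) : ℕ∞) := by
          gcongr
          exact sum_mult_le_totalDegree_mul A _ hlead
      _ ≤ ((P.totalDegree * #A ^ (n + 1 - 1) : ℕ) : ℕ∞) := by
          norm_cast
          calc _ ≤ p.leadingCoeff.totalDegree * #A ^ n + p.natDegree * #A ^ n := by
                rw [mul_comm (#A ^ n)]
                exact Nat.add_le_add_right hcard _
            _ = (p.leadingCoeff.totalDegree + p.natDegree) * #A ^ n := (add_mul ..).symm
            _ ≤ _ := Nat.mul_le_mul_right _ hdeg

end Domain

end SchwartzZippel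

theorem schwartz_zippel_with_multiplicities_general {F : Type*} [Field F] {n : ℕ}
    (A : Finset F) (P : MvPolynomial (Fin n) F) (hP : P ≠ 0) (d : ℕ)
    (hd : P.totalDegree = d) :
    ∑ a ∈ Fintype.piFinset (fun _ : Fin n => A), mult P a
      ≤ ((d * A.card ^ (n - 1) : ℕ) : ℕ∞) :=
  hd ▸ SchwartzZippel.sum_mult_le_totalDegree_mul A P hP

/-- Lemma 2.5 (strengthened Schwartz–Zippel): for `A ⊆ F_q` and a nonzero polynomial `P` of
degree `d`, `Σ_{a ∈ A^n} mult(P, a) ≤ d · |A|^{n-1}`. -/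
theorem schwartz_zippel_with_multiplicities {F : Type*} [Field F] [Fintype F] {n : ℕ}
    (A : Finset F) (P : MvPolynomial (Fin n) F) (hP : P ≠ 0) (d : ℕ)
    (hd : P.totalDegree = d) :
    ∑ a ∈ Fintype.piFinset (fun _ : Fin n => A), mult P a
      ≤ ((d * A.card ^ (n - 1) : ℕ) : ℕ∞) :=
  schwartz_zippel_with_multiplicities_general A P hP d hd
end

section
/- Let F_q be a finite field with q elements and let P ∈ F_q[x_1,…,x_n] be a polynomial that vanishes on all of F_q^n with multiplicity M (i.e., mult(P, a) ≥ M for every a ∈ F_q^n). If deg(P) < Mq, then P is the zero polynomial. -/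
open MvPolynomial

/-! Induction on the number of variables. Write `P = ∑ⱼ Pⱼ(x') x₀ʲ` with leading coefficient
`Pₜ`. For `a' ∈ F^{n-1}` and a multi-index `β` of order `s`, the `β`-coefficient of
`P(x₀, a' + x')` is a univariate polynomial of degree `≤ t` which vanishes to order `M - s` at
every point of `F`; if `q (M - s) > t` it is therefore zero, and so is its top coefficient, the
`β`-coefficient of `Pₜ(a' + x')`. Hence `Pₜ` vanishes everywhere with multiplicity
`M - ⌊t/q⌋`, while `deg Pₜ ≤ deg P - t < (M - ⌊t/q⌋) q`, so `Pₜ = 0` by induction. -/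

namespace Polynomial

theorem eq_zero_of_taylor_coeff_eq_zero {K : Type*} [Field K] {w : K[X]} (S : Finset K)
    {m : ℕ} (hdeg : w.natDegree < S.card * m)
    (hvanish : ∀ b ∈ S, ∀ k < m, (taylor b w).coeff k = 0) :
    w = 0 := by
  have hdvd : ∏ b ∈ S, (X - C b) ^ m ∣ w :=
    Finset.prod_dvd_of_coprime
      (fun _ _ _ _ hbc => ((pairwise_coprime_X_sub_C Function.injective_id) hbc).pow)
      fun b hb => X_sub_C_pow_dvd_iff.mpr (X_pow_dvd_iff.mpr (hvanish b hb))
  by_contra hw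
  have hdeg_le := natDegree_le_of_dvd hdvd hw
  rw [natDegree_prod _ _ fun b _ => pow_ne_zero _ (X_sub_C_ne_zero b)] at hdeg_le
  simp only [natDegree_pow, natDegree_X_sub_C, mul_one, Finset.sum_const, smul_eq_mul] at hdeg_le
  omega

noncomputable def mapCoeffs {R S : Type*} [Semiring R] [Semiring S] (φ : R →+ S) (p : R[X]) :
    S[X] :=
  ⟨.ofCoeff (p.toFinsupp.coeff.mapRange φ φ.map_zero)⟩

section mapCoeffs

variable {R S : Type*} [Semiring R] [Semiring S] (φ : R →+ S)

@[simp] theorem coeff_mapCoeffs (p : R[X]) (n : ℕ) :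
    (mapCoeffs φ p).coeff n = φ (p.coeff n) := by
  rcases p with ⟨p⟩
  simp [mapCoeffs, coeff]

theorem mapCoeffs_add (p q : R[X]) : mapCoeffs φ (p + q) = mapCoeffs φ p + mapCoeffs φ q := by
  ext n; simp

theorem mapCoeffs_monomial (n : ℕ) (r : R) : mapCoeffs φ (monomial n r) = monomial n (φ r) := by
  ext k; simp [coeff_monomial, apply_ite φ]

theorem natDegree_mapCoeffs_le (p : R[X]) : (mapCoeffs φ p).natDegree ≤ p.natDegree :=
  natDegree_le_iff_coeff_eq_zero.mpr fun n hn => by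
    rw [coeff_mapCoeffs, coeff_eq_zero_of_natDegree_lt hn, map_zero]

end mapCoeffs

theorem coeff_taylor_mapCoeffs {A R : Type*} [CommRing A] [CommRing R] [Algebra A R]
    (L : R →ₗ[A] A) (r : A) (p : R[X]) (k : ℕ) :
    (taylor r (mapCoeffs L.toAddMonoidHom p)).coeff k =
      L ((taylor (algebraMap A R r) p).coeff k) := by
  induction p using Polynomial.induction_on' with
  | add p q hp hq => simp only [mapCoeffs_add, map_add, coeff_add, hp, hq]
  | monomial j c =>
    simp only [mapCoeffs_monomial, taylor_coeff, hasseDeriv_monomial, eval_monomial]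
    have hsmul : (j.choose k : R) * c * algebraMap A R r ^ (j - k) =
        ((j.choose k : A) * r ^ (j - k)) • c := by
      rw [Algebra.smul_def, map_mul, map_pow, map_natCast]; ring
    rw [hsmul, L.map_smul, smul_eq_mul, LinearMap.toAddMonoidHom_coe]
    ring

end Polynomial

namespace MvPolynomial

noncomputable def translate {σ R : Type*} [CommSemiring R] (a : σ → R) :
    MvPolynomial σ R →ₐ[R] MvPolynomial σ R :=
  aeval fun i => C (a i) + X i

section translate

variable {σ R : Type*} [CommSemiring R]

@[simp] theorem translate_C (a : σ → R) (c : R) : translate a (C c) = C c :=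
  (translate a).commutes c

@[simp] theorem translate_X (a : σ → R) (i : σ) : translate a (X i) = C (a i) + X i :=
  aeval_X _ i

end translate

theorem finSuccEquiv_translate_cons {R : Type*} [CommRing R] {n : ℕ} (b : R) (a : Fin n → R)
    (P : MvPolynomial (Fin (n + 1)) R) :
    finSuccEquiv R n (translate (Fin.cons b a) P) =
      Polynomial.taylor (C b) (Polynomial.map (translate a).toRingHom (finSuccEquiv R n P)) := by
  change ((finSuccEquiv R n).toRingHom.comp (translate (Fin.cons b a)).toRingHom) P =
    ((Polynomial.taylorAlgHom (C b : MvPolynomial (Fin n) R)).toRingHom.comp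
      ((Polynomial.mapRingHom (translate a).toRingHom).comp (finSuccEquiv R n).toRingHom)) P
  congr 1
  refine ringHom_ext (fun c => ?_) (fun i => ?_)
  · simp [finSuccEquiv_apply]
  · refine Fin.cases ?_ (fun j => ?_) i
    · simp [finSuccEquiv_apply, add_comm]
    · simp [finSuccEquiv_apply]

theorem eval_hasseDeriv {R : Type*} [CommRing R] {n : ℕ} (β : Fin n →₀ ℕ)
    (P : MvPolynomial (Fin n) R) (a : Fin n → R) :
    eval a (hasseDeriv β P) = coeff β (translate a P) := by
  have hmap : map (eval a) (eval₂ (C.comp C) (fun i => C (X i) + X i) P) = translate a P := by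
    induction P using MvPolynomial.induction_on with
    | C c => simp
    | add p q hp hq => simp [hp, hq]
    | mul_X p i hp => simp [hp]
  rw [hasseDeriv, ← hmap, coeff_map]

theorem le_mult_iff {R : Type*} [CommRing R] {n : ℕ} {P : MvPolynomial (Fin n) R}
    {a : Fin n → R} {M : ℕ} :
    (M : ℕ∞) ≤ mult P a ↔
      ∀ β : Fin n →₀ ℕ, ∑ i, β i < M → coeff β (translate a P) = 0 := by
  simp only [← eval_hasseDeriv]
  constructor
  · intro hM β hβ
    obtain ⟨N, hN, hβN⟩ := lt_sSup_iff.mp (lt_of_lt_of_le (Nat.cast_lt.mpr hβ) hM)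
    exact hN β hβN
  · exact fun h => le_sSup fun β hβ => h β (Nat.cast_lt.mp hβ)

open Polynomial in
theorem le_mult_coeff_finSuccEquiv {F : Type*} [Field F] [Fintype F] {n : ℕ}
    {P : MvPolynomial (Fin (n + 1)) F} {M t : ℕ} (hmult : ∀ a, (M : ℕ∞) ≤ mult P a)
    (ht : (finSuccEquiv F n P).natDegree ≤ t) (a : Fin n → F) :
    ((M - t / Fintype.card F : ℕ) : ℕ∞) ≤ mult ((finSuccEquiv F n P).coeff t) a := by
  simp only [le_mult_iff] at hmult ⊢
  intro β hβ
  set g := (finSuccEquiv F n P).map (translate a).toRingHom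
  set w := mapCoeffs (lcoeff F β).toAddMonoidHom g
  have hdeg : w.natDegree < (Finset.univ : Finset F).card * (M - ∑ i, β i) := by
    have ht_lt : t < (M - ∑ i, β i) * Fintype.card F :=
      (Nat.div_lt_iff_lt_mul Fintype.card_pos).mp (by omega)
    calc w.natDegree ≤ t := (natDegree_mapCoeffs_le _ g).trans (natDegree_map_le.trans ht)
      _ < _ := by rwa [Finset.card_univ, mul_comm]
  have hw : w = 0 := eq_zero_of_taylor_coeff_eq_zero Finset.univ hdeg fun b _ k hk => by
    rw [coeff_taylor_mapCoeffs, MvPolynomial.algebraMap_eq, ← finSuccEquiv_translate_cons,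
      lcoeff_apply, finSuccEquiv_coeff_coeff]
    apply hmult (Fin.cons b a) (β.cons k)
    rw [Fin.sum_univ_succ]
    simp only [Finsupp.cons_zero, Finsupp.cons_succ]
    omega
  simpa [w, g, Polynomial.coeff_map] using congrArg (fun p => p.coeff t) hw

end MvPolynomial

/-- Consequence of the strengthened Schwartz–Zippel lemma: if `P` vanishes on all of `F_q^n`
with multiplicity `M` and `deg(P) < Mq`, then `P` is the zero polynomial. -/
theorem eq_zero_of_vanishing_everywhere_with_multiplicity {F : Type*} [Field F] [Fintype F]
    (q : ℕ) (hq : Fintype.card F = q) {n : ℕ}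
    (P : MvPolynomial (Fin n) F) (M : ℕ)
    (hmult : ∀ a : Fin n → F, (M : ℕ∞) ≤ mult P a)
    (hdeg : P.totalDegree < M * q) :
    P = 0 := by
  subst hq
  induction n generalizing M with
  | zero =>
    rw [eq_C_of_isEmpty P] at hmult ⊢
    have hM : 0 < M := Nat.pos_of_mul_pos_right (Nat.zero_lt_of_lt hdeg)
    simpa using le_mult_iff.mp (hmult isEmptyElim) 0 (by simpa using hM)
  | succ n ih =>
    set f := finSuccEquiv F n P
    by_contra hP
    have hlead : f.coeff f.natDegree ≠ 0 :=
      Polynomial.leadingCoeff_ne_zero.mpr ((finSuccEquiv F n).map_ne_zero_iff.mpr hP)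
    have hdeg_lead : (f.coeff f.natDegree).totalDegree + f.natDegree < M * Fintype.card F :=
      (totalDegree_coeff_finSuccEquiv_add_le P _ hlead).trans_lt hdeg
    refine hlead (ih _ (M - f.natDegree / Fintype.card F)
      (le_mult_coeff_finSuccEquiv hmult le_rfl) ?_)
    calc (f.coeff f.natDegree).totalDegree < M * Fintype.card F - f.natDegree := by omega
      _ ≤ M * Fintype.card F - f.natDegree / Fintype.card F * Fintype.card F :=
        Nat.sub_le_sub_left (Nat.div_mul_le_self _ _) _
      _ = _ := (Nat.sub_mul ..).symm
end

section
/- Let q be a prime power and k, n ∈ N with n ≥ 2. Let ℓ, m ∈ Z_{≥0} with 2 ≤ ℓ < q. Let Q ∈ F_q[x_1, x_2] be a polynomial of degree d < k(q-1) such that every exponent α = (α_1, α_2) of a monomial appearing in Q satisfies α_1 + ℓα_2 = m. Let b ∈ F_q be nonzero and f(t) = b·t^ℓ ∈ F_q[t]. Suppose that for every nonzero ρ ∈ F_q and every β ∈ Z_{≥0}^2 with β_1 + β_2 < k, the univariate polynomial Q_{β,ρ}(t) := Q^{(β)}(ρt, ρf(t)) is the zero polynomial. Then Q is the zero polynomial.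 -/
open MvPolynomial

open Finset

section Aux
variable {F : Type*} [CommRing F]

lemma single_add_single_eq_iff (j l : ℕ) (β : Fin 2 →₀ ℕ) :
    Finsupp.single (0 : Fin 2) j + Finsupp.single 1 l = β ↔ j = β 0 ∧ l = β 1 := by
  constructor
  · rintro rfl
    simp
  · rintro ⟨rfl, rfl⟩
    ext i
    fin_cases i <;> simp

lemma pow_CX_add (i : Fin 2) (a : ℕ) :
    (C (X i) + X i : MvPolynomial (Fin 2) (MvPolynomial (Fin 2) F)) ^ a =
      ∑ j ∈ Finset.range (a + 1),
        monomial (Finsupp.single i j) ((a.choose j : MvPolynomial (Fin 2) F) * X i ^ (a - j)) := by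
  rw [add_comm (C (X i)), add_pow]
  refine Finset.sum_congr rfl fun j hj => ?_
  rw [X_pow_eq_monomial, ← C_pow]
  rw [mul_comm ((monomial (Finsupp.single i j)) 1) (C (X i ^ (a - j))), C_mul_monomial]
  rw [show ((a.choose j : ℕ) : MvPolynomial (Fin 2) (MvPolynomial (Fin 2) F)) = C ((a.choose j : ℕ) : MvPolynomial (Fin 2) F) from (map_natCast C _).symm]
  rw [mul_comm _ (C _), C_mul_monomial]
  ring_nf

lemma hasseDeriv_monomial₂ (β α : Fin 2 →₀ ℕ) (c : F) :
    hasseDeriv β (monomial α c) =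
      monomial (α - β) ((((α 0).choose (β 0) * (α 1).choose (β 1) : ℕ) : F) * c) := by
  unfold hasseDeriv
  rw [eval₂_monomial]
  rw [Finsupp.prod_fintype _ _ (fun i => pow_zero _), Fin.prod_univ_two]
  rw [pow_CX_add, pow_CX_add]
  simp only [RingHom.comp_apply, Finset.mul_sum, Finset.sum_mul, monomial_mul]
  simp only [coeff_sum, coeff_C_mul, coeff_monomial, single_add_single_eq_iff]
  simp only [ite_and, mul_ite, mul_zero]
  simp only [Finset.sum_ite_eq', Finset.mem_range, Nat.lt_succ_iff]
  by_cases h0 : β 0 ≤ α 0 <;> by_cases h1 : β 1 ≤ α 1 <;>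
    simp only [h0, h1, if_true, if_false, Finset.sum_ite_eq', Finset.mem_range,
      Nat.lt_succ_iff, Finset.sum_const_zero]
  · rw [monomial_eq, Finsupp.prod_fintype _ _ (fun i => pow_zero _),
      Fin.prod_univ_two, Finsupp.tsub_apply, Finsupp.tsub_apply]
    simp only [C_mul, map_natCast, Nat.cast_mul]
    ring
  · rw [Nat.choose_eq_zero_of_lt (not_le.1 h1)]
    simp
  · rw [Nat.choose_eq_zero_of_lt (not_le.1 h0)]
    simp
  · rw [Nat.choose_eq_zero_of_lt (not_le.1 h1)]
    simp

lemma hasseDeriv_eq_sum (β : Fin 2 →₀ ℕ) (Q : MvPolynomial (Fin 2) F) :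
    hasseDeriv β Q = ∑ α ∈ Q.support,
      monomial (α - β) ((((α 0).choose (β 0) * (α 1).choose (β 1) : ℕ) : F) * coeff α Q) := by
  conv_lhs => rw [Q.as_sum]
  unfold hasseDeriv
  rw [← coe_eval₂Hom, map_sum, coeff_sum]
  exact Finset.sum_congr rfl fun α hα => hasseDeriv_monomial₂ β α (coeff α Q)

lemma CX_pow_identity (ρ b r : F) (ℓ e0 e1 : ℕ) :
    Polynomial.C r * ((Polynomial.C ρ * Polynomial.X) ^ e0 *
        (Polynomial.C ρ * (Polynomial.C b * Polynomial.X ^ ℓ)) ^ e1)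
      = Polynomial.C (r * ρ ^ (e0 + e1) * b ^ e1) * Polynomial.X ^ (e0 + ℓ * e1) := by
  simp only [mul_pow, ← Polynomial.C_pow, ← pow_mul, pow_add, map_mul]
  ring

end Aux

/-- Proposition 1.3 in dimension 2: if `Q ∈ F_q[x_1, x_2]` has degree `d < k(q-1)`, every
exponent `α` of `Q` satisfies `α_1 + ℓα_2 = m` (with `2 ≤ ℓ < q`), `f(t) = b·t^ℓ` with
`b ≠ 0`, and for every nonzero `ρ` and every `β` with `|β| < k` the univariate polynomial
`Q^{(β)}(ρt, ρf(t))` is identically zero, then `Q` is the zero polynomial. -/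
theorem homogeneous_brk_proposition_dim_two {F : Type*} [Field F] [Fintype F]
    (q k n : ℕ) (hq : Fintype.card F = q) (hn : 2 ≤ n)
    (ℓ m : ℕ) (hℓ2 : 2 ≤ ℓ) (hℓq : ℓ < q)
    (Q : MvPolynomial (Fin 2) F) (d : ℕ) (hd : Q.totalDegree = d) (hdk : d < k * (q - 1))
    (hexp : ∀ α ∈ Q.support, α 0 + ℓ * α 1 = m)
    (b : F) (hb : b ≠ 0)
    (hQ : ∀ ρ : F, ρ ≠ 0 → ∀ β : Fin 2 →₀ ℕ, β 0 + β 1 < k →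
      MvPolynomial.aeval (fun i : Fin 2 =>
          if i = 0 then Polynomial.C ρ * Polynomial.X
          else Polynomial.C ρ * (Polynomial.C b * Polynomial.X ^ ℓ))
        (hasseDeriv β Q) = 0) :
    Q = 0 := by
  classical
  -- Step A: key algebraic identity from the hypothesis
  have keyA : ∀ ρ : F, ρ ≠ 0 → ∀ β : Fin 2 →₀ ℕ, β 0 + β 1 < k →
      ∑ α ∈ Q.support, coeff α Q * (((α 0).choose (β 0) * (α 1).choose (β 1) : ℕ) : F)
        * ρ ^ (α 0 + α 1 - (β 0 + β 1)) * b ^ (α 1 - β 1) = 0 := by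
    intro ρ hρ β hβ
    have h0 := hQ ρ hρ β hβ
    rw [hasseDeriv_eq_sum, map_sum] at h0
    have h2 : ∀ α ∈ Q.support,
        Polynomial.coeff ((MvPolynomial.aeval (fun i : Fin 2 =>
            if i = 0 then Polynomial.C ρ * Polynomial.X
            else Polynomial.C ρ * (Polynomial.C b * Polynomial.X ^ ℓ)))
          ((monomial (α - β)) ((((α 0).choose (β 0) * (α 1).choose (β 1) : ℕ) : F) * coeff α Q)))
          (m - (β 0 + ℓ * β 1))
        = coeff α Q * (((α 0).choose (β 0) * (α 1).choose (β 1) : ℕ) : F)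
            * ρ ^ (α 0 + α 1 - (β 0 + β 1)) * b ^ (α 1 - β 1) := by
      intro α hα
      rw [aeval_monomial, Finsupp.prod_fintype _ _ (fun i => pow_zero _), Fin.prod_univ_two,
        Finsupp.tsub_apply, Finsupp.tsub_apply]
      simp only [if_pos rfl, if_true, ite_true, if_neg (show ¬((1 : Fin 2) = 0) by decide), Polynomial.algebraMap_eq]
      rw [mul_assoc, CX_pow_identity, Polynomial.coeff_C_mul, Polynomial.coeff_X_pow]
      by_cases hba : β 0 ≤ α 0 ∧ β 1 ≤ α 1
      · obtain ⟨hb0, hb1⟩ := hba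
        have hm := hexp α hα
        have hms : ℓ * (α 1 - β 1) = ℓ * α 1 - ℓ * β 1 := Nat.mul_sub ℓ _ _
        have hle : ℓ * β 1 ≤ ℓ * α 1 := Nat.mul_le_mul_left ℓ hb1
        have hE : α 0 - β 0 + ℓ * (α 1 - β 1) = m - (β 0 + ℓ * β 1) := by omega
        have hR : α 0 - β 0 + (α 1 - β 1) = α 0 + α 1 - (β 0 + β 1) := by omega
        rw [if_pos hE.symm, hR]
        ring
      · have hz : ((α 0).choose (β 0) * (α 1).choose (β 1) : ℕ) = 0 := by
          rcases not_and_or.1 hba with h | h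
          · exact Nat.mul_eq_zero.2 (Or.inl (Nat.choose_eq_zero_of_lt (not_le.1 h)))
          · exact Nat.mul_eq_zero.2 (Or.inr (Nat.choose_eq_zero_of_lt (not_le.1 h)))
        rw [hz]
        simp
    calc ∑ α ∈ Q.support, coeff α Q * (((α 0).choose (β 0) * (α 1).choose (β 1) : ℕ) : F)
          * ρ ^ (α 0 + α 1 - (β 0 + β 1)) * b ^ (α 1 - β 1)
        = ∑ α ∈ Q.support, Polynomial.coeff ((MvPolynomial.aeval (fun i : Fin 2 =>
              if i = 0 then Polynomial.C ρ * Polynomial.X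
              else Polynomial.C ρ * (Polynomial.C b * Polynomial.X ^ ℓ)))
            ((monomial (α - β)) ((((α 0).choose (β 0) * (α 1).choose (β 1) : ℕ) : F) * coeff α Q)))
            (m - (β 0 + ℓ * β 1)) := (Finset.sum_congr rfl h2).symm
      _ = Polynomial.coeff (∑ α ∈ Q.support, (MvPolynomial.aeval (fun i : Fin 2 =>
              if i = 0 then Polynomial.C ρ * Polynomial.X
              else Polynomial.C ρ * (Polynomial.C b * Polynomial.X ^ ℓ)))
            ((monomial (α - β)) ((((α 0).choose (β 0) * (α 1).choose (β 1) : ℕ) : F) * coeff α Q)))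
            (m - (β 0 + ℓ * β 1)) := (Polynomial.finset_sum_coeff _ _ _).symm
      _ = 0 := by rw [h0]; simp
  -- the univariate polynomial g
  set g : Polynomial F := ∑ α ∈ Q.support,
      Polynomial.monomial (α 0 + α 1) (coeff α Q * b ^ (α 1)) with hg
  -- Step B: Hasse derivatives of g vanish at nonzero points
  have keyB : ∀ j < k, ∀ ρ : F, ρ ≠ 0 → Polynomial.eval ρ (Polynomial.hasseDeriv j g) = 0 := by
    intro j hj ρ hρ
    rw [hg, map_sum, Polynomial.eval_finset_sum]
    simp only [Polynomial.hasseDeriv_monomial, Polynomial.eval_monomial]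
    have expand : ∀ α ∈ Q.support,
        (((α 0 + α 1).choose j : ℕ) : F) * (coeff α Q * b ^ (α 1)) * ρ ^ (α 0 + α 1 - j)
        = ∑ i ∈ Finset.range (j + 1), coeff α Q * (((α 0).choose i * (α 1).choose (j - i) : ℕ) : F)
            * ρ ^ (α 0 + α 1 - j) * (b ^ (j - i) * b ^ (α 1 - (j - i))) := by
      intro α hα
      have vdm : (α 0 + α 1).choose j
          = ∑ i ∈ Finset.range (j + 1), (α 0).choose i * (α 1).choose (j - i) := by
        rw [Nat.add_choose_eq, Finset.Nat.sum_antidiagonal_eq_sum_range_succ_mk]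
      rw [vdm, Nat.cast_sum, Finset.sum_mul, Finset.sum_mul]
      refine Finset.sum_congr rfl fun i hi => ?_
      by_cases hba : j - i ≤ α 1
      · have hbb : b ^ (j - i) * b ^ (α 1 - (j - i)) = b ^ (α 1) := by
          rw [← pow_add]
          congr 1
          omega
        rw [hbb]
        push_cast
        ring
      · rw [Nat.choose_eq_zero_of_lt (not_le.1 hba)]
        simp
    rw [Finset.sum_congr rfl expand, Finset.sum_comm]
    refine Finset.sum_eq_zero fun i hi => ?_
    have hij : i ≤ j := Nat.lt_succ_iff.1 (Finset.mem_range.1 hi)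
    set β : Fin 2 →₀ ℕ := Finsupp.single (0 : Fin 2) i + Finsupp.single 1 (j - i) with hβdef
    have c0 : β 0 = i := by simp [hβdef, Finsupp.single_apply]
    have c1 : β 1 = j - i := by simp [hβdef, Finsupp.single_apply]
    have hk' := keyA ρ hρ β (by rw [c0, c1]; omega)
    have step : ∑ α ∈ Q.support, coeff α Q * (((α 0).choose i * (α 1).choose (j - i) : ℕ) : F)
          * ρ ^ (α 0 + α 1 - j) * (b ^ (j - i) * b ^ (α 1 - (j - i)))
        = b ^ (j - i) * ∑ α ∈ Q.support, coeff α Q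
            * (((α 0).choose (β 0) * (α 1).choose (β 1) : ℕ) : F)
            * ρ ^ (α 0 + α 1 - (β 0 + β 1)) * b ^ (α 1 - β 1) := by
      rw [Finset.mul_sum]
      refine Finset.sum_congr rfl fun α hα => ?_
      rw [c0, c1, show i + (j - i) = j by omega]
      ring
    rw [step, hk', mul_zero]
  -- degree bound for g
  have hdegg : g.natDegree ≤ d := by
    refine Polynomial.natDegree_sum_le_of_forall_le _ _ fun α hα => ?_
    refine le_trans (Polynomial.natDegree_monomial_le _) ?_
    have h1 := MvPolynomial.le_totalDegree hα
    have hsum : (α.sum fun _ e => e) = α 0 + α 1 := by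
      rw [Finsupp.sum_fintype _ _ (fun i => rfl), Fin.sum_univ_two]
    rw [hsum, hd] at h1
    exact h1
  -- Step C : g = 0
  have hgzero : g = 0 := by
    by_contra hgne
    have hmult : ∀ ρ : F, ρ ≠ 0 → k ≤ g.rootMultiplicity ρ := by
      intro ρ hρ
      rw [Polynomial.le_rootMultiplicity_iff hgne]
      have hX : Polynomial.X ^ k ∣ Polynomial.taylor ρ g :=
        Polynomial.X_pow_dvd_iff.2 fun i hi => by
          rw [Polynomial.taylor_coeff]; exact keyB i hi ρ hρ
      obtain ⟨h, hh⟩ := hX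
      refine ⟨h.comp (Polynomial.X - Polynomial.C ρ), ?_⟩
      have hcomp := congrArg (fun p => p.comp (Polynomial.X - Polynomial.C ρ)) hh
      simp only [Polynomial.taylor_apply] at hcomp
      rw [Polynomial.comp_assoc, Polynomial.mul_comp, Polynomial.X_pow_comp] at hcomp
      simpa using hcomp
    have hcard : (Finset.univ.erase (0 : F)).card = q - 1 := by
      rw [Finset.card_erase_of_mem (Finset.mem_univ 0), Finset.card_univ, hq]
    have h1 : (q - 1) * k ≤ ∑ ρ ∈ Finset.univ.erase (0 : F), g.roots.count ρ := by
      calc (q - 1) * k = ∑ _ρ ∈ Finset.univ.erase (0 : F), k := by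
            rw [Finset.sum_const, smul_eq_mul, hcard]
        _ ≤ _ := Finset.sum_le_sum fun ρ hρ => by
            rw [Polynomial.count_roots]
            exact hmult ρ (Finset.mem_erase.1 hρ).1
    have h2 : ∑ ρ ∈ Finset.univ.erase (0 : F), g.roots.count ρ ≤ Multiset.card g.roots := by
      calc ∑ ρ ∈ Finset.univ.erase (0 : F), g.roots.count ρ
          ≤ ∑ ρ ∈ g.roots.toFinset ∪ Finset.univ.erase (0 : F), g.roots.count ρ :=
            Finset.sum_le_sum_of_subset Finset.subset_union_right
        _ = ∑ ρ ∈ g.roots.toFinset, g.roots.count ρ :=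
            (Finset.sum_subset Finset.subset_union_left fun x _ hx =>
              Multiset.count_eq_zero.2 fun hmem => hx (Multiset.mem_toFinset.2 hmem)).symm
        _ = Multiset.card g.roots := Multiset.toFinset_sum_count_eq _
    have h3 : Multiset.card g.roots ≤ g.natDegree := Polynomial.card_roots' g
    have hmc : (q - 1) * k = k * (q - 1) := Nat.mul_comm _ _
    omega
  -- Step D : extract coefficients
  have hcoeff : ∀ α ∈ Q.support, coeff α Q = 0 := by
    intro a' ha'
    have hco := congrArg (fun p => Polynomial.coeff p (a' 0 + a' 1)) hgzero
    simp only [hg, Polynomial.finset_sum_coeff, Polynomial.coeff_monomial,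
      Polynomial.coeff_zero] at hco
    rw [Finset.sum_eq_single_of_mem a' ha' ?ne, if_pos rfl] at hco
    case ne =>
      intro α hα hne
      rw [if_neg ?hne]
      case hne =>
        intro heq
        apply hne
        have e1 := hexp α hα
        have e2 := hexp a' ha'
        have h11 : α 1 = a' 1 := by
          rcases le_total (α 1) (a' 1) with h | h
          · have hmm : ℓ * a' 1 = ℓ * α 1 + ℓ * (a' 1 - α 1) := by
              rw [← Nat.mul_add]
              congr 1
              omega
            have h2t : 2 * (a' 1 - α 1) ≤ ℓ * (a' 1 - α 1) :=
              Nat.mul_le_mul_right _ hℓ2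
            omega
          · have hmm : ℓ * α 1 = ℓ * a' 1 + ℓ * (α 1 - a' 1) := by
              rw [← Nat.mul_add]
              congr 1
              omega
            have h2t : 2 * (α 1 - a' 1) ≤ ℓ * (α 1 - a' 1) :=
              Nat.mul_le_mul_right _ hℓ2
            omega
        have h00 : α 0 = a' 0 := by omega
        ext i
        fin_cases i
        · exact h00
        · exact h11
    rcases mul_eq_zero.1 hco with h | h
    · exact h
    · exact absurd h (pow_ne_zero _ hb)
  rw [MvPolynomial.eq_zero_iff]
  intro α
  by_cases hα : α ∈ Q.support
  · exact hcoeff α hα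
  · exact MvPolynomial.notMem_support_iff.1 hα
end

section
/- Let q be a prime power, n ≥ 2, and let ℓ ∈ N with 2 ≤ ℓ < q. Let g ∈ F_q[s_1,…,s_{n-1}] be a homogeneous polynomial of degree ℓ, and let S ⊆ F_q^n be a BRK-type set of degree ℓ (with respect to g). Then for every k ∈ N that is a multiple of q, setting D = k(q-1) - 1 and M = (ℓ+1)k - 2ℓk/q, one has binom(M+n-1, n) · |S| ≥ binom(D+n, n). -/
/-!
For `ρ ≠ 0` the curve `{a + ρ (λ, G_ρ(λ))}` of a BRK-type set is the graph of a polynomial map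
`F^(n-1) → F` of degree at most `ℓ` with leading form `ρ^(1-ℓ) g`. When `ρ^(ℓ-1) ≠ σ^(ℓ-1)` the
leading forms of the curves of `ρ` and `σ` differ, so by Schwartz–Zippel the two graphs meet in at
most `ℓ q^(n-2)` points. Since `x ↦ x^(ℓ-1)` is at most `(ℓ-1)`-to-one on `Fˣ`, there are about
`q/ℓ` values of `ρ` with pairwise distinct `(ℓ-1)`-th powers, and Bonferroni's inequality for
their curves gives `q^n ≤ 2ℓ|S|`. Finally `ℓ (D + 1 + i) ≤ q (M + i)` termwise yields
`ℓ^n binom(D+n, n) ≤ q^n binom(M+n-1, n)`, and `2ℓ ≤ ℓ^n`.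
-/

open MvPolynomial

/-- `IsBRKType g ℓ S` : `S` is a BRK-type set of degree `ℓ` with respect to the homogeneous
polynomial `g` of degree `ℓ`: for every `ρ ∈ F_q` there are `a ∈ F_q^n` and a polynomial
`gρ` whose homogeneous part of highest degree is `g` (i.e. `gρ = g + h` with `deg h < ℓ`)
such that `{a + ρ·(λ, gρ(λ)) : λ ∈ F_q^{n-1}} ⊆ S`. -/
def IsBRKType {F : Type*} [Field F] (n ℓ : ℕ) (g : MvPolynomial (Fin (n - 1)) F)
    (S : Finset (Fin n → F)) : Prop :=
  ∀ ρ : F, ∃ a : Fin n → F, ∃ gρ : MvPolynomial (Fin (n - 1)) F,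
    (∃ h : MvPolynomial (Fin (n - 1)) F, gρ = g + h ∧ h.totalDegree < ℓ) ∧
    ∀ lam : Fin (n - 1) → F,
      (fun i : Fin n => a i + ρ *
        (if hi : (i : ℕ) < n - 1 then lam ⟨i, hi⟩ else MvPolynomial.eval lam gρ)) ∈ S

open Finset

namespace Nat

theorem pow_mul_ascFactorial_le_pow_mul_ascFactorial {a b c d n : ℕ}
    (h : ∀ i < n, a * (c + i) ≤ b * (d + i)) :
    a ^ n * c.ascFactorial n ≤ b ^ n * d.ascFactorial n := by
  have hpow (x : ℕ) : x ^ n = ∏ _i ∈ range n, x := by simp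
  rw [ascFactorial_eq_prod_range, ascFactorial_eq_prod_range, hpow a, hpow b,
    ← prod_mul_distrib, ← prod_mul_distrib]
  exact prod_le_prod' fun i hi => h i (mem_range.1 hi)

theorem pow_mul_choose_le_pow_mul_choose {a b D M n : ℕ}
    (h : ∀ i < n, a * (D + 1 + i) ≤ b * (M + i)) :
    a ^ n * (D + n).choose n ≤ b ^ n * (M + n - 1).choose n := by
  have h' := pow_mul_ascFactorial_le_pow_mul_ascFactorial h
  rw [ascFactorial_eq_factorial_mul_choose, ascFactorial_eq_factorial_mul_choose',
    mul_left_comm, mul_left_comm (b ^ n)] at h'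
  exact Nat.le_of_mul_le_mul_left h' n.factorial_pos

end Nat

namespace Finset

variable {ι β : Type*} [DecidableEq ι] [DecidableEq β]

theorem mul_sum_card_le_mul_card_biUnion_add {s : Finset ι} {A : ι → Finset β} {c K : ℕ}
    (hA : ∀ i ∈ s, ∀ j ∈ s, i ≠ j → c * #(A i ∩ A j) ≤ K) :
    c * ∑ i ∈ s, #(A i) ≤ c * #(s.biUnion A) + (#s).choose 2 * K := by
  induction s using Finset.induction_on with
  | empty => simp
  | insert a s ha ih =>
    have hinter : c * #(A a ∩ s.biUnion A) ≤ #s * K := by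
      rw [inter_biUnion]
      refine (Nat.mul_le_mul_left c card_biUnion_le).trans ?_
      rw [mul_sum, ← smul_eq_mul]
      exact sum_le_card_nsmul _ _ _ fun i hi =>
        hA a (mem_insert_self a s) i (mem_insert_of_mem hi) (ne_of_mem_of_not_mem hi ha).symm
    have hunion := card_union_add_card_inter (A a) (s.biUnion A)
    have ih' := ih fun i hi j hj => hA i (mem_insert_of_mem hi) j (mem_insert_of_mem hj)
    rw [sum_insert ha, biUnion_insert, card_insert_of_notMem ha, Nat.choose_succ_succ',
      Nat.choose_one_right]
    nlinarith

/-- With `#T = t + 1` sets, Bonferroni gives `2q(t+1)N ≤ 2q#S + (t+1)tℓN`, and `tℓ < q ≤ (t+1)ℓ`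
is the choice of `t` that makes the right-hand side small enough. -/
theorem mul_le_two_mul_card_of_card_inter_le {S : Finset β} {T : Finset ι} {A : ι → Finset β}
    {q ℓ N : ℕ} (hAS : ∀ i ∈ T, A i ⊆ S) (hA : ∀ i ∈ T, #(A i) = N)
    (hAA : ∀ i ∈ T, ∀ j ∈ T, i ≠ j → q * #(A i ∩ A j) ≤ ℓ * N)
    (hqT : q ≤ #T * ℓ) (hTq : (#T - 1) * ℓ < q) :
    N * q ≤ 2 * ℓ * #S := by
  have hunion : #(T.biUnion A) ≤ #S := card_le_card (biUnion_subset.2 hAS)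
  have hbonf := mul_sum_card_le_mul_card_biUnion_add hAA
  rw [sum_congr rfl hA, sum_const, smul_eq_mul] at hbonf
  obtain ⟨t, ht⟩ : ∃ t, #T = t + 1 :=
    Nat.exists_eq_succ_of_ne_zero fun h => by simp [h] at hqT; omega
  rw [ht, Nat.choose_two_right, Nat.add_sub_cancel] at hbonf
  rw [ht, Nat.add_sub_cancel] at hTq
  rw [ht] at hqT
  have hq : 0 < q := by omega
  have hpairs : (t + 1) * t / 2 * (ℓ * N) * 2 = (t + 1) * t * (ℓ * N) := by
    rw [mul_right_comm, Nat.div_two_mul_two_of_even (by rw [mul_comm]; exact t.even_mul_succ_self)]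
  have h1 : (t + 1) * (q + 1) * N ≤ 2 * q * #S := by
    have htℓ : (t + 1) * (t * ℓ + 1) * N ≤ (t + 1) * q * N := by gcongr; omega
    nlinarith [Nat.mul_le_mul_left q hunion]
  have h2 : q * ((q + 1) * N) ≤ q * (2 * ℓ * #S) := by
    nlinarith [Nat.mul_le_mul_right ((q + 1) * N) hqT, Nat.mul_le_mul_left ℓ h1]
  nlinarith [Nat.le_of_mul_le_mul_left h2 hq]

end Finset

theorem exists_card_eq_injOn_pow {R : Type*} [CommRing R] [IsDomain R] [Fintype R] {k t : ℕ}
    (hk : 0 < k) (ht : k * (t - 1) < Fintype.card R - 1) :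
    ∃ T : Finset R, 0 ∉ T ∧ #T = t ∧ Set.InjOn (· ^ k) (T : Set R) := by
  classical
  set W := (univ.erase (0 : R)).image (· ^ k)
  have hW : Fintype.card R - 1 ≤ k * #W := by
    rw [← card_univ, ← card_erase_of_mem (mem_univ 0)]
    refine card_le_mul_card_image _ k fun w _ => (card_le_card fun x hx => ?_).trans
      ((Multiset.toFinset_card_le _).trans (Polynomial.card_nthRoots k w))
    rw [Multiset.mem_toFinset, Polynomial.mem_nthRoots hk]
    exact (mem_filter.1 hx).2
  obtain ⟨T₀, hT₀, hinj, himage⟩ := exists_subset_injOn_image_eq_of_surjOn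
    (univ.erase (0 : R) : Set R) W (by rw [coe_image]; exact Set.surjOn_image _ _)
  have htW : t ≤ #T₀ := by
    rw [← card_image_of_injOn hinj, himage]
    by_contra h
    have := Nat.mul_le_mul_left k (show #W ≤ t - 1 by omega)
    omega
  obtain ⟨T, hT, rfl⟩ := exists_subset_card_eq htW
  exact ⟨T, fun h => by simpa using hT₀ (hT h), rfl, hinj.mono hT⟩

namespace MvPolynomial

section LeadingForm

variable {σ τ R : Type*} [CommSemiring R]

theorem homogeneousComponent_mul_of_totalDegree_le {p q : MvPolynomial σ R} {d e : ℕ}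
    (hp : p.totalDegree ≤ d) (hq : q.totalDegree ≤ e) :
    homogeneousComponent (d + e) (p * q) =
      homogeneousComponent d p * homogeneousComponent e q := by
  classical
  ext n
  simp only [coeff_homogeneousComponent, coeff_mul, ite_mul, zero_mul, mul_ite, mul_zero,
    ← ite_and]
  rw [ite_sum_zero]
  refine sum_congr rfl fun x hx => ?_
  by_cases hne : coeff x.1 p * coeff x.2 q = 0
  · simp [hne]
  have h1 : x.1.degree ≤ d :=
    (le_totalDegree (mem_support_iff.2 (left_ne_zero_of_mul hne))).trans hp
  have h2 : x.2.degree ≤ e :=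
    (le_totalDegree (mem_support_iff.2 (right_ne_zero_of_mul hne))).trans hq
  rw [HasAntidiagonal.mem_antidiagonal] at hx
  rw [← hx, map_add]
  exact if_congr (by omega) rfl rfl

theorem homogeneousComponent_prod_of_totalDegree_le {ι : Type*} (s : Finset ι)
    {f : ι → MvPolynomial σ R} {e : ι → ℕ} (hf : ∀ i ∈ s, (f i).totalDegree ≤ e i) :
    homogeneousComponent (∑ i ∈ s, e i) (∏ i ∈ s, f i) =
      ∏ i ∈ s, homogeneousComponent (e i) (f i) := by
  classical
  induction s using Finset.induction_on with
  | empty => simp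
  | insert a s ha ih =>
    rw [sum_insert ha, prod_insert ha, prod_insert ha,
      homogeneousComponent_mul_of_totalDegree_le (hf a (mem_insert_self a s))
        ((totalDegree_finsetProd _ _).trans (sum_le_sum fun i hi => hf i (mem_insert_of_mem hi))),
      ih fun i hi => hf i (mem_insert_of_mem hi)]

theorem homogeneousComponent_pow_of_totalDegree_le {p : MvPolynomial σ R} {d : ℕ}
    (hp : p.totalDegree ≤ d) (k : ℕ) :
    homogeneousComponent (k * d) (p ^ k) = homogeneousComponent d p ^ k := by
  simpa using homogeneousComponent_prod_of_totalDegree_le (range k) (fun _ _ => hp)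

theorem totalDegree_bind₁_le {A : σ → MvPolynomial τ R} (hA : ∀ i, (A i).totalDegree ≤ 1)
    (p : MvPolynomial σ R) : (bind₁ A p).totalDegree ≤ p.totalDegree := by
  conv_lhs => rw [p.as_sum]
  rw [map_sum]
  refine totalDegree_finsetSum_le fun m hm => ?_
  rw [bind₁_monomial]
  refine (totalDegree_mul _ _).trans ?_
  rw [totalDegree_C, zero_add]
  refine (totalDegree_finsetProd _ _).trans ((sum_le_sum fun i _ => ?_).trans (le_totalDegree hm))
  exact (totalDegree_pow _ _).trans (by simpa using Nat.mul_le_mul_left (m i) (hA i))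

theorem homogeneousComponent_bind₁_of_totalDegree_le {A : σ → MvPolynomial τ R}
    (hA : ∀ i, (A i).totalDegree ≤ 1) {p : MvPolynomial σ R} {d : ℕ} (hp : p.totalDegree ≤ d) :
    homogeneousComponent d (bind₁ A p) =
      bind₁ (fun i => homogeneousComponent 1 (A i)) (homogeneousComponent d p) := by
  classical
  conv_lhs => rw [p.as_sum]
  rw [homogeneousComponent_apply d p, map_sum, map_sum, map_sum, sum_filter]
  refine sum_congr rfl fun m hm => ?_
  split_ifs with hmd
  · subst hmd
    rw [bind₁_monomial, bind₁_monomial, homogeneousComponent_C_mul, Finsupp.degree_apply,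
      homogeneousComponent_prod_of_totalDegree_le m.support (e := m) fun i _ => ?_]
    · exact congrArg _ (prod_congr rfl fun i _ => by
        simpa using homogeneousComponent_pow_of_totalDegree_le (hA i) (m i))
    · simpa using (totalDegree_pow (A i) (m i)).trans (Nat.mul_le_mul_left (m i) (hA i))
  · refine homogeneousComponent_eq_zero _ _
      (((totalDegree_bind₁_le hA _).trans (totalDegree_monomial_le _ _)).trans_lt ?_)
    exact lt_of_le_of_ne ((le_totalDegree hm).trans hp : m.degree ≤ d) hmd

theorem IsHomogeneous.bind₁_C_mul_X {p : MvPolynomial σ R} {d : ℕ}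
    (hp : p.IsHomogeneous d) (c : R) : bind₁ (fun i => C c * X i) p = C (c ^ d) * p := by
  conv_lhs => rw [p.as_sum]
  conv_rhs => rw [p.as_sum]
  rw [map_sum, mul_sum]
  refine sum_congr rfl fun m hm => ?_
  have hmd : m.degree = d := by rw [Finsupp.degree_eq_weight_one]; exact hp (mem_support_iff.1 hm)
  rw [bind₁_monomial, monomial_eq, ← hmd, Finsupp.degree_apply, Finsupp.prod]
  simp only [mul_pow, prod_mul_distrib, ← map_pow, ← map_prod, prod_pow_eq_pow_sum]
  ring

end LeadingForm

theorem totalDegree_C_mul_X_sub_C_le {σ R : Type*} [CommRing R] [Nontrivial R] (c b : R) (j : σ) :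
    (C c * (X j - C b) : MvPolynomial σ R).totalDegree ≤ 1 := by
  refine (totalDegree_mul _ _).trans ?_
  rw [totalDegree_C, zero_add]
  exact (totalDegree_sub _ _).trans (max_le (totalDegree_X j).le (by simp))

theorem card_mul_card_zeros_le {R : Type*} [CommRing R] [IsDomain R] [Fintype R] [DecidableEq R]
    {m : ℕ} {p : MvPolynomial (Fin m) R} (hp : p ≠ 0) :
    Fintype.card R * #{x : Fin m → R | eval x p = 0} ≤ p.totalDegree * Fintype.card R ^ m := by
  have h := schwartz_zippel_totalDegree hp univ
  simp only [Fintype.piFinset_univ, card_univ] at h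
  have hq : (0 : ℚ≥0) < Fintype.card R := by exact_mod_cast Fintype.card_pos
  rw [div_le_div_iff₀ (by positivity) hq] at h
  rw [mul_comm]
  exact_mod_cast h

end MvPolynomial

section Graph

variable {α : Type*} [Fintype α] [DecidableEq α] {m : ℕ}

def graphFinset (f : (Fin m → α) → α) : Finset (Fin (m + 1) → α) :=
  univ.image fun y => Fin.snoc y (f y)

theorem card_graphFinset (f : (Fin m → α) → α) : #(graphFinset f) = Fintype.card α ^ m := by
  rw [graphFinset, card_image_of_injective _ fun y y' h => by simpa using congrArg Fin.init h,
    card_univ, Fintype.card_fun, Fintype.card_fin]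

theorem card_graphFinset_inter_le (f f' : (Fin m → α) → α) :
    #(graphFinset f ∩ graphFinset f') ≤ #{y | f y = f' y} := by
  refine (card_le_card fun x hx => ?_).trans (card_image_le (f := fun y => Fin.snoc y (f y)))
  simp only [graphFinset, mem_inter, mem_image, mem_univ, true_and] at hx
  obtain ⟨⟨y, rfl⟩, ⟨y', h⟩⟩ := hx
  obtain ⟨rfl, h⟩ := Fin.snoc_inj.1 h
  exact mem_image_of_mem _ (mem_filter.2 ⟨mem_univ _, h.symm⟩)

end Graph

section Curves

variable {F : Type*} [Field F] {m ℓ : ℕ}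

/-- For `ρ ≠ 0` the curve `{a + ρ (λ, G λ)}` is the graph of `y ↦ a_last + ρ G(ρ⁻¹ (y - a'))`,
where `a'` is `a` without its last coordinate (`snoc_eval_brkGraphPoly`). -/
noncomputable def brkGraphPoly (a : Fin (m + 1) → F) (ρ : F) (G : MvPolynomial (Fin m) F) :
    MvPolynomial (Fin m) F :=
  C (a (Fin.last m)) + C ρ * bind₁ (fun j => C ρ⁻¹ * (X j - C (a j.castSucc))) G

theorem snoc_eval_brkGraphPoly {a : Fin (m + 1) → F} {ρ : F} (hρ : ρ ≠ 0)
    (G : MvPolynomial (Fin m) F) (y : Fin m → F) :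
    Fin.snoc y (eval y (brkGraphPoly a ρ G)) =
      a + ρ • Fin.snoc (ρ⁻¹ • (y - Fin.init a)) (eval (ρ⁻¹ • (y - Fin.init a)) G) := by
  have heval : eval y (bind₁ (fun j => C ρ⁻¹ * (X j - C (a j.castSucc))) G) =
      eval (ρ⁻¹ • (y - Fin.init a)) G := by
    change eval₂Hom (RingHom.id F) y _ = _
    rw [eval₂Hom_bind₁]
    congr 2
    funext j
    simp [Fin.init]
  ext i
  refine Fin.lastCases ?_ (fun j => ?_) i
  · simp [brkGraphPoly, heval]
  · simp [Fin.init, hρ]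

theorem totalDegree_brkGraphPoly_le (a : Fin (m + 1) → F) (ρ : F) {G : MvPolynomial (Fin m) F}
    (hG : G.totalDegree ≤ ℓ) : (brkGraphPoly a ρ G).totalDegree ≤ ℓ := by
  refine (totalDegree_add _ _).trans (max_le (by simp) ((totalDegree_mul _ _).trans ?_))
  rw [totalDegree_C, zero_add]
  exact (totalDegree_bind₁_le (fun j => totalDegree_C_mul_X_sub_C_le _ _ j) G).trans hG

theorem homogeneousComponent_brkGraphPoly (a : Fin (m + 1) → F) {ρ : F} (hρ : ρ ≠ 0)
    (hℓ : 1 ≤ ℓ) {G : MvPolynomial (Fin m) F} (hG : G.totalDegree ≤ ℓ) :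
    homogeneousComponent ℓ (brkGraphPoly a ρ G) =
      C (ρ⁻¹ ^ (ℓ - 1)) * homogeneousComponent ℓ G := by
  have hlin (j : Fin m) :
      homogeneousComponent 1 (C ρ⁻¹ * (X j - C (a j.castSucc))) = C ρ⁻¹ * X j := by
    rw [homogeneousComponent_C_mul, map_sub, homogeneousComponent_eq_self (isHomogeneous_X F j),
      homogeneousComponent_eq_zero _ _ (by simp), sub_zero]
  rw [brkGraphPoly, map_add, homogeneousComponent_eq_zero _ _ (by simp; omega),
    homogeneousComponent_C_mul, homogeneousComponent_bind₁_of_totalDegree_le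
      (fun j => totalDegree_C_mul_X_sub_C_le _ _ j) hG, funext hlin,
    (homogeneousComponent_isHomogeneous ℓ G).bind₁_C_mul_X, zero_add, ← mul_assoc, ← map_mul]
  congr 2
  obtain ⟨k, rfl⟩ := Nat.exists_eq_add_of_le' hℓ
  rw [pow_succ', ← mul_assoc, mul_inv_cancel₀ hρ, one_mul, Nat.add_sub_cancel]

theorem card_mul_card_graphFinset_brkGraphPoly_inter_le [Fintype F] [DecidableEq F]
    (hℓ : 1 ≤ ℓ) {g : MvPolynomial (Fin m) F} (hg0 : g ≠ 0)
    {a b : Fin (m + 1) → F} {ρ σ : F} (hρ : ρ ≠ 0) (hσ : σ ≠ 0) (hρσ : ρ ^ (ℓ - 1) ≠ σ ^ (ℓ - 1))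
    {G G' : MvPolynomial (Fin m) F} (hG : G.totalDegree ≤ ℓ) (hGg : homogeneousComponent ℓ G = g)
    (hG' : G'.totalDegree ≤ ℓ) (hG'g : homogeneousComponent ℓ G' = g) :
    Fintype.card F * #(graphFinset (fun y => eval y (brkGraphPoly a ρ G)) ∩
      graphFinset (fun y => eval y (brkGraphPoly b σ G'))) ≤ ℓ * Fintype.card F ^ m := by
  set P := brkGraphPoly a ρ G - brkGraphPoly b σ G'
  have hPdeg : P.totalDegree ≤ ℓ := (totalDegree_sub _ _).trans
    (max_le (totalDegree_brkGraphPoly_le a ρ hG) (totalDegree_brkGraphPoly_le b σ hG'))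
  have hP : P ≠ 0 := by
    have hcomp : homogeneousComponent ℓ P = C (ρ⁻¹ ^ (ℓ - 1) - σ⁻¹ ^ (ℓ - 1)) * g := by
      rw [map_sub, homogeneousComponent_brkGraphPoly a hρ hℓ hG,
        homogeneousComponent_brkGraphPoly b hσ hℓ hG', hGg, hG'g, map_sub, sub_mul]
    intro h
    rw [h, map_zero, eq_comm, mul_eq_zero, C_eq_zero, sub_eq_zero, inv_pow, inv_pow,
      inv_inj] at hcomp
    exact hcomp.elim hρσ hg0
  calc Fintype.card F * #(graphFinset (fun y => eval y (brkGraphPoly a ρ G)) ∩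
        graphFinset (fun y => eval y (brkGraphPoly b σ G')))
      ≤ Fintype.card F * #{y : Fin m → F | eval y P = 0} := by
        gcongr
        refine (card_graphFinset_inter_le _ _).trans_eq (congrArg card (filter_congr fun y _ => ?_))
        simp [P, sub_eq_zero]
    _ ≤ P.totalDegree * Fintype.card F ^ m := card_mul_card_zeros_le hP
    _ ≤ ℓ * Fintype.card F ^ m := by gcongr

end Curves

theorem IsBRKType.exists_curve {F : Type*} [Field F] {m ℓ : ℕ} {g : MvPolynomial (Fin m) F}
    {S : Finset (Fin (m + 1) → F)} (hg : g.IsHomogeneous ℓ) (hS : IsBRKType (m + 1) ℓ g S)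
    (ρ : F) : ∃ (a : Fin (m + 1) → F) (G : MvPolynomial (Fin m) F), G.totalDegree ≤ ℓ ∧
      homogeneousComponent ℓ G = g ∧ ∀ lam, a + ρ • Fin.snoc lam (eval lam G) ∈ S := by
  -- `hS ρ` is stated over `Fin (m + 1 - 1)`, which is `Fin m` only up to defeq.
  obtain ⟨a, _, ⟨h, rfl, hh⟩, hmem⟩ : ∃ a : Fin (m + 1) → F, ∃ G : MvPolynomial (Fin m) F,
      (∃ h : MvPolynomial (Fin m) F, G = g + h ∧ h.totalDegree < ℓ) ∧ ∀ lam : Fin m → F,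
        (fun i : Fin (m + 1) => a i + ρ * (if hi : (i : ℕ) < m then lam ⟨i, hi⟩ else eval lam G))
          ∈ S := hS ρ
  refine ⟨a, g + h, (totalDegree_add _ _).trans (max_le hg.totalDegree_le hh.le), ?_,
    fun lam => ?_⟩
  · rw [map_add, homogeneousComponent_eq_self hg, homogeneousComponent_eq_zero _ _ hh, add_zero]
  · convert hmem lam using 1
    funext i
    refine Fin.lastCases ?_ (fun j => ?_) i <;> simp

theorem pow_le_two_mul_card_of_isBRKType {F : Type*} [Field F] [Fintype F] {m ℓ : ℕ}
    (hℓ : 2 ≤ ℓ) (hℓq : ℓ < Fintype.card F) {g : MvPolynomial (Fin m) F} (hg0 : g ≠ 0)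
    (hg : g.IsHomogeneous ℓ) {S : Finset (Fin (m + 1) → F)} (hS : IsBRKType (m + 1) ℓ g S) :
    Fintype.card F ^ (m + 1) ≤ 2 * ℓ * #S := by
  classical
  set q := Fintype.card F
  choose a G hGdeg hGg hGS using hS.exists_curve hg
  obtain ⟨u, huq, hqu⟩ : ∃ u, u * ℓ < q ∧ q ≤ (u + 1) * ℓ := by
    have hlt := Nat.lt_div_mul_add (a := q - 1) (show 0 < ℓ by omega)
    refine ⟨(q - 1) / ℓ, (Nat.div_mul_le_self (q - 1) ℓ).trans_lt (by omega), ?_⟩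
    rw [add_mul, one_mul]
    omega
  have hu : (ℓ - 1) * u < q - 1 := by
    obtain _ | u := u
    · omega
    · rw [Nat.sub_one_mul, mul_comm]
      omega
  obtain ⟨T, hT0, hTcard, hTinj⟩ := exists_card_eq_injOn_pow (k := ℓ - 1) (t := u + 1)
    (by omega) (by simpa using hu)
  have hgraph (ρ : F) (hρ : ρ ∈ T) :
      graphFinset (fun y => eval y (brkGraphPoly (a ρ) ρ (G ρ))) ⊆ S := fun x hx => by
    obtain ⟨y, -, rfl⟩ := mem_image.1 hx
    rw [snoc_eval_brkGraphPoly (ne_of_mem_of_not_mem hρ hT0)]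
    exact hGS ρ _
  rw [pow_succ]
  exact mul_le_two_mul_card_of_card_inter_le hgraph (fun ρ _ => card_graphFinset _)
    (fun ρ hρ σ hσ hρσ => card_mul_card_graphFinset_brkGraphPoly_inter_le (by omega) hg0
      (ne_of_mem_of_not_mem hρ hT0) (ne_of_mem_of_not_mem hσ hT0) (fun h => hρσ (hTinj hρ hσ h))
      (hGdeg ρ) (hGg ρ) (hGdeg σ) (hGg σ))
    (by rwa [hTcard]) (by simpa [hTcard] using huq)

/-- Quantitative form of the main theorem: for a BRK-type set `S ⊆ F_q^n` of degree `ℓ`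
(`2 ≤ ℓ < q`), every positive multiple `k` of `q`, `D = k(q-1) - 1` and
`M = (ℓ+1)k - 2ℓk/q` satisfy `binom(M+n-1, n) · |S| ≥ binom(D+n, n)`. -/
theorem brk_type_set_binomial_bound {F : Type*} [Field F] [Fintype F] (q n ℓ : ℕ)
    (hq : Fintype.card F = q) (hn : 2 ≤ n) (hℓ : 2 ≤ ℓ) (hℓq : ℓ < q)
    (g : MvPolynomial (Fin (n - 1)) F) (hg0 : g ≠ 0) (hg : g.IsHomogeneous ℓ)
    (S : Finset (Fin n → F)) (hS : IsBRKType n ℓ g S)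
    (k : ℕ) (hk : 0 < k) (hkq : q ∣ k)
    (D M : ℕ) (hD : D = k * (q - 1) - 1) (hM : M = (ℓ + 1) * k - 2 * ℓ * k / q) :
    Nat.choose (D + n) n ≤ Nat.choose (M + n - 1) n * S.card := by
  obtain ⟨m, rfl⟩ : ∃ m, n = m + 1 := ⟨n - 1, by omega⟩
  have hcard : q ^ (m + 1) ≤ 2 * ℓ * #S :=
    hq ▸ pow_le_two_mul_card_of_isBRKType hℓ (hq ▸ hℓq) hg0 hg hS
  -- `q (M + i) = ℓ (D + 1 + i) + (q - ℓ) (k + i)`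
  have hbinom : ℓ ^ (m + 1) * (D + (m + 1)).choose (m + 1) ≤
      q ^ (m + 1) * (M + (m + 1) - 1).choose (m + 1) := by
    refine Nat.pow_mul_choose_le_pow_mul_choose fun i _ => ?_
    obtain ⟨c, rfl⟩ := hkq
    have hdiv : 2 * ℓ * (q * c) / q = 2 * ℓ * c := by
      rw [mul_left_comm, Nat.mul_div_cancel_left _ (by omega)]
    have hD1 : D + 1 + q * c = q * c * q := by
      have : q * c * 3 ≤ q * c * q := Nat.mul_le_mul_left (q * c) (by omega)
      rw [Nat.mul_sub_one] at hD
      omega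
    have hM1 : M + 2 * ℓ * c = (ℓ + 1) * (q * c) := by
      have : 2 * ℓ * c ≤ (ℓ + 1) * (q * c) := by nlinarith
      omega
    nlinarith [congrArg (ℓ * ·) hD1, congrArg (q * ·) hM1, Nat.mul_le_mul_right (q * c + i) hℓq.le]
  have h2ℓ : 2 * ℓ ≤ ℓ ^ (m + 1) := by
    rw [pow_succ]
    exact Nat.mul_le_mul_right ℓ (hℓ.trans (Nat.le_self_pow (by omega) ℓ))
  refine Nat.le_of_mul_le_mul_left ?_ (show 0 < ℓ ^ (m + 1) by positivity)
  calc ℓ ^ (m + 1) * (D + (m + 1)).choose (m + 1)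
      ≤ q ^ (m + 1) * (M + (m + 1) - 1).choose (m + 1) := hbinom
    _ ≤ ℓ ^ (m + 1) * #S * (M + (m + 1) - 1).choose (m + 1) := by
        gcongr
        exact hcard.trans (Nat.mul_le_mul_right _ h2ℓ)
    _ = ℓ ^ (m + 1) * ((M + (m + 1) - 1).choose (m + 1) * #S) := by ring
end
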